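/- arXiv:2307.06802 — 7 statements merged into one kernel-verified Lean document; each statement's English description precedes it below -/
import Mathlib

section
/- Every minimal acyclic DFA recognizing a nonempty finite language that is not linear is composite: its language is the intersection of the language of words of length at most n with the complements of singleton languages {w} for each rejected word w of length at most n, and each DFA involved has size at most n+2 < ind(A). -/
/-- State `q'` is reachable from state `q` in DFA `A`. -/
def ReachableFrom {α σ : Type} (A : DFA α σ) (q q' : σ) : Prop :=
  ∃ w : List α, A.evalFrom q w = q'

/-- A rejecting sink: a non-accepting state all of whose transitions are self-loops. -/
def IsRejectingSink {α σ : Type} (A : DFA α σ) (q : σ) : Prop :=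
  q ∉ A.accept ∧ ∀ a, A.step q a = q

/-- A DFA is acyclic if every cycle begins in a rejecting sink. -/
def DFAAcyclic {α σ : Type} (A : DFA α σ) : Prop :=
  ∀ (q : σ) (w : List α), w ≠ [] → A.evalFrom q w = q → IsRejectingSink A q

/-- A DFA is linear if reachability induces a strict linear order on states. -/
def DFALinear {α σ : Type} (A : DFA α σ) : Prop :=
  ∀ q q' : σ, q ≠ q' → Xor' (ReachableFrom A q q') (ReachableFrom A q' q)

/-- A DFA is minimal if no DFA with strictly fewer states recognizes the same language. -/
def DFAMinimal {α σ : Type} [Fintype σ] (A : DFA α σ) : Prop :=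
  ∀ n : ℕ, (∃ B : DFA α (Fin n), B.accepts = A.accepts) → Fintype.card σ ≤ n

/-- The index of a language: the number of states of its minimal DFA. -/
noncomputable def Ind {α : Type} (L : Language α) : ℕ :=
  sInf {n : ℕ | ∃ B : DFA α (Fin n), B.accepts = L}

/-- Safety language: once rejected, every extension is rejected. -/
def IsSafety {α : Type} (L : Language α) : Prop :=
  ∀ w y : List α, w ∉ L → (w ++ y) ∉ L

/-- `L` is an intersection of languages of DFAs each with at most `k` states. -/
def InterDecomp {α : Type} (L : Language α) (k : ℕ) : Prop :=
  ∃ (t : ℕ) (sz : Fin (t + 1) → ℕ) (B : ∀ i, DFA α (Fin (sz i))),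
    (∀ i, sz i ≤ k) ∧ ∀ w : List α, w ∈ L ↔ ∀ i, w ∈ (B i).accepts

/-- A DFA is composite if its language is an intersection of languages of DFAs each
with fewer states than its index. -/
def DFAComposite {α σ : Type} [Fintype σ] (A : DFA α σ) : Prop :=
  InterDecomp A.accepts (Ind A.accepts - 1)

/-- The compression-extension property for a DFA whose longest accepted word has length `n`. -/
def HasCEP {α σ : Type} (A : DFA α σ) (n : ℕ) : Prop :=
  ∀ w ∈ A.accepts, w.length = n →
    ∃ i l : ℕ, i + 2 ≤ n ∧ 2 ≤ l ∧ i + l ≤ n ∧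
      ∀ v : List α, v ≠ [] → (w.take i ++ w.drop (i + l)) ++ v ∉ A.accepts

/-- `L` is a union of languages of DFAs each with fewer than `k` states. -/
def UnionDecomp {α : Type} (L : Language α) (k : ℕ) : Prop :=
  ∃ (t : ℕ) (sz : Fin (t + 1) → ℕ) (B : ∀ i, DFA α (Fin (sz i))),
    (∀ i, sz i < k) ∧ ∀ w : List α, w ∈ L ↔ ∃ i, w ∈ (B i).accepts

/-- `L` is a union of intersections of languages of DFAs each with fewer than `k` states. -/
def DNFDecomp {α : Type} (L : Language α) (k : ℕ) : Prop :=
  ∃ (s : ℕ) (t : Fin (s + 1) → ℕ) (sz : ∀ i : Fin (s + 1), Fin (t i + 1) → ℕ)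
    (B : ∀ i j, DFA α (Fin (sz i j))),
    (∀ i j, sz i j < k) ∧ ∀ w : List α, w ∈ L ↔ ∃ i, ∀ j, w ∈ (B i j).accepts

section DFAaux
open scoped Classical
variable {α β σ : Type}

/-- DFA accepting words of length at most `n`. -/
def lenDFA (α : Type) (n : ℕ) : DFA α (Fin (n + 2)) where
  step := fun q _ => ⟨min (q.val + 1) (n + 1), by omega⟩
  start := ⟨0, by omega⟩
  accept := {q | q.val ≤ n}

lemma lenDFA_step (n : ℕ) (q : Fin (n + 2)) (a : α) :
    ((lenDFA α n).step q a).val = min (q.val + 1) (n + 1) := rfl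

lemma lenDFA_eval (n : ℕ) (w : List α) :
    ((lenDFA α n).eval w).val = min w.length (n + 1) := by
  induction w using List.reverseRecOn with
  | nil => simp [lenDFA, DFA.eval]
  | append_singleton x a ih =>
      rw [DFA.eval_append_singleton, lenDFA_step, ih, List.length_append]
      simp

lemma lenDFA_accepts (n : ℕ) (w : List α) :
    w ∈ (lenDFA α n).accepts ↔ w.length ≤ n := by
  rw [DFA.mem_accepts]
  have h := lenDFA_eval n w
  show ((lenDFA α n).eval w).val ≤ n ↔ _
  omega

/-- DFA accepting words `w` with `w.map f ≠ m` (for `m.length ≤ n`). -/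
noncomputable def compDFA (f : α → β) (m : List β) (n : ℕ) : DFA α (Fin (n + 2)) where
  step := fun q a =>
    if h : q.val < m.length then
      (if f a = m.get ⟨q.val, h⟩ then ⟨min (q.val + 1) (n + 1), by omega⟩ else ⟨n + 1, by omega⟩)
    else ⟨n + 1, by omega⟩
  start := ⟨0, by omega⟩
  accept := {q | q.val ≠ m.length}

lemma compDFA_step_val (f : α → β) (m : List β) (n : ℕ) (q : Fin (n + 2)) (a : α) :
    ((compDFA f m n).step q a).val =
      if h : q.val < m.length then
        (if f a = m.get ⟨q.val, h⟩ then min (q.val + 1) (n + 1) else n + 1)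
      else n + 1 := by
  simp only [compDFA]
  split
  · split <;> rfl
  · rfl

lemma compDFA_eval (f : α → β) (m : List β) (n : ℕ) (hm : m.length ≤ n) (w : List α) :
    ((compDFA f m n).eval w).val =
      if w.map f = m.take w.length ∧ w.length ≤ m.length then w.length else n + 1 := by
  induction w using List.reverseRecOn with
  | nil => simp [compDFA, DFA.eval]
  | append_singleton x a ih =>
      rw [DFA.eval_append_singleton, compDFA_step_val]
      by_cases hc : x.map f = m.take x.length ∧ x.length ≤ m.length
      · rw [if_pos hc] at ih
        by_cases hlt : x.length < m.length
        · have hlt' : ((compDFA f m n).eval x).val < m.length := by omega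
          rw [dif_pos hlt']
          have hget : m.take (x.length + 1) = m.take x.length ++ [m.get ⟨x.length, hlt⟩] := by
            rw [← List.take_concat_get hlt]; simp [List.concat_eq_append]
          have hgeq : m.get ⟨((compDFA f m n).eval x).val, hlt'⟩ = m.get ⟨x.length, hlt⟩ := by
            congr 1
            exact Fin.ext ih
          rw [hgeq]
          by_cases ha : f a = m.get ⟨x.length, hlt⟩
          · have hcc : (x ++ [a]).map f = m.take (x ++ [a]).length ∧
                (x ++ [a]).length ≤ m.length := by
              constructor
              · simp only [List.map_append, List.map_cons, List.map_nil, List.length_append,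
                  List.length_singleton]
                rw [hget, hc.1, ha]
              · simp only [List.length_append, List.length_singleton]; omega
            rw [if_pos ha, if_pos hcc, ih]
            simp only [List.length_append, List.length_singleton]
            omega
          · have hcc : ¬((x ++ [a]).map f = m.take (x ++ [a]).length ∧
                (x ++ [a]).length ≤ m.length) := by
              rintro ⟨h1, h2⟩
              simp only [List.map_append, List.map_cons, List.map_nil, List.length_append,
                List.length_singleton] at h1
              rw [hget] at h1
              have h3 := List.append_inj' h1 rfl
              exact ha (by simpa using h3.2)
            rw [if_neg ha, if_neg hcc]
        · have hcc : ¬((x ++ [a]).map f = m.take (x ++ [a]).length ∧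
              (x ++ [a]).length ≤ m.length) := by
            rintro ⟨_, h2⟩
            simp only [List.length_append, List.length_singleton] at h2
            omega
          rw [if_neg hcc, dif_neg (by omega)]
      · rw [if_neg hc] at ih
        have hcc : ¬((x ++ [a]).map f = m.take (x ++ [a]).length ∧
            (x ++ [a]).length ≤ m.length) := by
          rintro ⟨h1, h2⟩
          simp only [List.length_append, List.length_singleton] at h2
          have hlt : x.length < m.length := by omega
          have hget : m.take (x.length + 1) = m.take x.length ++ [m.get ⟨x.length, hlt⟩] := by
            rw [← List.take_concat_get hlt]; simp [List.concat_eq_append]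
          simp only [List.map_append, List.map_cons, List.map_nil, List.length_append,
            List.length_singleton] at h1
          rw [hget] at h1
          have h3 := List.append_inj' h1 rfl
          exact hc ⟨h3.1, by omega⟩
        rw [if_neg hcc, dif_neg (by omega)]

lemma compDFA_accepts (f : α → β) (m : List β) (n : ℕ) (hm : m.length ≤ n) (w : List α) :
    w ∈ (compDFA f m n).accepts ↔ w.map f ≠ m := by
  rw [DFA.mem_accepts]
  have h := compDFA_eval f m n hm w
  show ((compDFA f m n).eval w).val ≠ m.length ↔ _
  by_cases hc : w.map f = m.take w.length ∧ w.length ≤ m.length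
  · rw [if_pos hc] at h
    rw [h]
    constructor
    · intro hne heq
      exact hne (by rw [← List.length_map (as := w) f, heq])
    · intro hne heq
      apply hne
      rw [hc.1, heq, List.take_length]
  · rw [if_neg hc] at h
    rw [h]
    constructor
    · intro _ heq
      apply hc
      have hl : w.length = m.length := by rw [← List.length_map (as := w) f, heq]
      exact ⟨by rw [hl, List.take_length, heq], by omega⟩
    · intro _; omega

end DFAaux

section Aux2
variable {α β σ : Type}

lemma sink_evalFrom (A : DFA α σ) {q : σ} (h : IsRejectingSink A q) :
    ∀ w : List α, A.evalFrom q w = q := by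
  intro w
  induction w using List.reverseRecOn with
  | nil => rfl
  | append_singleton x a ih => rw [DFA.evalFrom_append_singleton, ih, h.2]

lemma no_mutual_reach (A : DFA α σ) (hacyc : DFAAcyclic A) {p p' : σ} (hne : p ≠ p')
    (h1 : ReachableFrom A p p') (h2 : ReachableFrom A p' p) : False := by
  obtain ⟨w1, hw1⟩ := h1
  obtain ⟨w2, hw2⟩ := h2
  rcases eq_or_ne w1 [] with h | h
  · exact hne (by rw [← hw1, h]; rfl)
  · have hloop : A.evalFrom p (w1 ++ w2) = p := by
      rw [DFA.evalFrom_of_append, hw1, hw2]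
    have hsink := hacyc p (w1 ++ w2) (by simp [h]) hloop
    exact hne (by rw [← hw1, sink_evalFrom A hsink])

/-- Reindexing a DFA along `Fintype.equivFin`. -/
lemma ind_ge_card [Fintype σ] (A : DFA α σ) (hmin : DFAMinimal A) :
    Fintype.card σ ≤ Ind A.accepts := by
  classical
  set e := Fintype.equivFin σ with he
  set B : DFA α (Fin (Fintype.card σ)) :=
    ⟨fun i a => e (A.step (e.symm i) a), e A.start, {i | e.symm i ∈ A.accept}⟩ with hB
  have hev : ∀ (w : List α) (q : σ), B.evalFrom (e q) w = e (A.evalFrom q w) := by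
    intro w
    induction w with
    | nil => intro q; rfl
    | cons a x ih =>
        intro q
        show B.evalFrom (B.step (e q) a) x = e (A.evalFrom (A.step q a) x)
        have : B.step (e q) a = e (A.step q a) := by simp [hB]
        rw [this, ih]
  have hacc : B.accepts = A.accepts := by
    ext w
    rw [DFA.mem_accepts, DFA.mem_accepts]
    show B.evalFrom (e A.start) w ∈ B.accept ↔ _
    rw [hev]
    simp only [hB, Set.mem_setOf_eq, Equiv.symm_apply_apply]
    rfl
  have hmem : Ind A.accepts ∈ {n : ℕ | ∃ C : DFA α (Fin n), C.accepts = A.accepts} :=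
    Nat.sInf_mem ⟨Fintype.card σ, B, hacc⟩
  exact hmin _ hmem

end Aux2

theorem chain_card {α σ : Type} [Fintype σ] (A : DFA α σ)
    (hmin : DFAMinimal A) (hacyc : DFAAcyclic A)
    (hne : ∃ w : List α, w ∈ A.accepts)
    (n : ℕ) (hbound : ∀ w ∈ A.accepts, List.length w ≤ n)
    (hmax : ∃ w ∈ A.accepts, List.length w = n)
    (hnotlin : ¬ DFALinear A) :
    n + 3 ≤ Fintype.card σ := by
  classical
  -- α is nonempty
  have hα : Nonempty α := by
    by_contra hα
    rw [not_nonempty_iff] at hα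
    have hall : ∀ w : List α, w = [] := by
      intro w; cases w with
      | nil => rfl
      | cons a _ => exact (hα.false a).elim
    have hB : ∃ B : DFA α (Fin 1), B.accepts = A.accepts := by
      refine ⟨⟨fun _ _ => 0, 0, Set.univ⟩, ?_⟩
      ext w
      have hw := hall w
      subst hw
      obtain ⟨v, hv⟩ := hne
      have hv' : ([] : List α) ∈ A.accepts := hall v ▸ hv
      simp only [DFA.mem_accepts]
      exact ⟨fun _ => hv', fun _ => Set.mem_univ _⟩
    have hcard := hmin 1 hB
    apply hnotlin
    intro q q' hqq
    exact absurd (Fintype.card_le_one_iff.mp hcard q q') hqq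
  obtain ⟨a0⟩ := hα
  obtain ⟨w, hw, hwlen⟩ := hmax
  have hwacc : A.eval w ∈ A.accept := (DFA.mem_accepts A).mp hw
  set qi : ℕ → σ := fun i => A.eval (w.take i) with hqi
  have hsplit : ∀ i, A.eval w = A.evalFrom (qi i) (w.drop i) := by
    intro i
    show A.evalFrom A.start w = _
    conv_lhs => rw [← List.take_append_drop i w]
    rw [DFA.evalFrom_of_append]
    rfl
  have hreach : ∀ i j, i ≤ j → A.evalFrom (qi i) ((w.take j).drop i) = qi j := by
    intro i j hij
    have h1 : w.take i ++ (w.take j).drop i = w.take j := by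
      conv_rhs => rw [← List.take_append_drop i (w.take j)]
      rw [List.take_take, min_eq_left hij]
    show _ = A.evalFrom A.start (w.take j)
    conv_rhs => rw [← h1]
    rw [DFA.evalFrom_of_append]
    rfl
  have hnotsink : ∀ i, qi i ≠ A.eval w → ¬ IsRejectingSink A (qi i) := by
    intro i _ hsink
    have : A.eval w = qi i := by rw [hsplit i, sink_evalFrom A hsink]
    exact hsink.1 (this ▸ hwacc)
  have hqinj : ∀ i j, i < j → j ≤ n → qi i ≠ qi j := by
    intro i j hij hjn heq
    have hlen : ((w.take j).drop i).length = j - i := by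
      rw [List.length_drop, List.length_take]
      omega
    have hnil : (w.take j).drop i ≠ [] := by
      intro h; rw [h] at hlen; simp at hlen; omega
    have hsink := hacyc (qi i) _ hnil (by rw [hreach i j (le_of_lt hij), ← heq])
    have : A.eval w = qi i := by rw [hsplit i, sink_evalFrom A hsink]
    exact hsink.1 (this ▸ hwacc)
  -- dead state
  have hdead : ∃ d : σ, IsRejectingSink A d ∧
      ∃ k : ℕ, A.evalFrom (A.eval w) (List.replicate k a0) = d := by
    have key : ∀ k l : ℕ, k < l →
        A.evalFrom (A.eval w) (List.replicate k a0) =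
          A.evalFrom (A.eval w) (List.replicate l a0) →
        ∃ d : σ, IsRejectingSink A d ∧
          ∃ k : ℕ, A.evalFrom (A.eval w) (List.replicate k a0) = d := by
      intro k l hkl heq
      set d := A.evalFrom (A.eval w) (List.replicate k a0) with hd
      have hsp : List.replicate l a0 = List.replicate k a0 ++ List.replicate (l - k) a0 := by
        rw [← List.replicate_add]
        congr 1
        omega
      have hloop : A.evalFrom d (List.replicate (l - k) a0) = d := by
        rw [hd, ← DFA.evalFrom_of_append, ← hsp, ← heq]
      have hnil : List.replicate (l - k) a0 ≠ [] := by
        have : (List.replicate (l - k) a0).length = l - k := List.length_replicate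
        intro h; rw [h] at this; simp at this; omega
      exact ⟨d, hacyc d _ hnil hloop, k, rfl⟩
    obtain ⟨k, l, hkl, heq⟩ := Fintype.exists_ne_map_eq_of_card_lt
      (fun k : Fin (Fintype.card σ + 1) =>
        A.evalFrom (A.eval w) (List.replicate k.val a0)) (by simp)
    rcases Ne.lt_or_gt hkl with h | h
    · exact key k.val l.val h heq
    · exact key l.val k.val h heq.symm
  obtain ⟨d, hdsink, kd, hkd⟩ := hdead
  -- d is reachable from every chain state
  have hdreach : ∀ i, ReachableFrom A (qi i) d := by
    intro i
    exact ⟨w.drop i ++ List.replicate kd a0, by rw [DFA.evalFrom_of_append, ← hsplit, hkd]⟩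
  have hdne : ∀ i, i ≤ n → d ≠ qi i := by
    intro i _ heq
    have : A.eval w = d := by rw [hsplit i, ← heq, sink_evalFrom A hdsink]
    exact hdsink.1 (this ▸ hwacc)
  -- the incомparable pair
  rw [DFALinear] at hnotlin
  push_neg at hnotlin
  obtain ⟨p, p', hpp, hnx⟩ := hnotlin
  rw [Xor'] at hnx
  simp only [Xor, not_or, not_and, not_not] at hnx
  have hnR : ¬ ReachableFrom A p p' ∧ ¬ ReachableFrom A p' p := by
    constructor
    · intro h
      exact no_mutual_reach A hacyc hpp h (hnx.1 h)
    · intro h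
      exact no_mutual_reach A hacyc hpp (hnx.2 h) h
  -- chain membership
  set inC : σ → Prop := fun x => (∃ i ≤ n, qi i = x) ∨ x = d with hinC
  have hcomp : ∀ x y, inC x → inC y → ReachableFrom A x y ∨ ReachableFrom A y x := by
    rintro x y (⟨i, hi, rfl⟩ | rfl) (⟨j, hj, rfl⟩ | rfl)
    · rcases le_total i j with h | h
      · exact Or.inl ⟨(w.take j).drop i, hreach i j h⟩
      · exact Or.inr ⟨(w.take i).drop j, hreach j i h⟩
    · exact Or.inl (hdreach i)
    · exact Or.inr (hdreach j)
    · exact Or.inl ⟨[], rfl⟩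
  have hx : ∃ x : σ, ¬ inC x ∧ True := by
    by_cases hp : inC p
    · by_cases hp' : inC p'
      · rcases hcomp p p' hp hp' with h | h
        · exact (hnR.1 h).elim
        · exact (hnR.2 h).elim
      · exact ⟨p', hp', trivial⟩
    · exact ⟨p, hp, trivial⟩
  obtain ⟨x, hxC, -⟩ := hx
  -- counting
  have hxqi : ∀ i, i ≤ n → x ≠ qi i := by
    intro i hi heq
    exact hxC (Or.inl ⟨i, hi, heq.symm⟩)
  have hxd : x ≠ d := fun heq => hxC (Or.inr heq)
  classical
  set S0 : Finset σ := (Finset.range (n + 1)).image (fun i => qi i) with hS0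
  have hS0card : S0.card = n + 1 := by
    rw [hS0, Finset.card_image_of_injOn, Finset.card_range]
    intro i hi j hj hij
    simp only [Finset.coe_range, Set.mem_Iio] at hi hj
    by_contra hne'
    rcases Ne.lt_or_gt hne' with h | h
    · exact hqinj i j h (by omega) hij
    · exact hqinj j i h (by omega) hij.symm
  have hdS0 : d ∉ S0 := by
    rw [hS0]
    simp only [Finset.mem_image, Finset.mem_range, not_exists]
    rintro i ⟨hi, heq⟩
    exact hdne i (by omega) heq.symm
  have hxS1 : x ∉ insert d S0 := by
    simp only [Finset.mem_insert, hS0, Finset.mem_image, Finset.mem_range]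
    rintro (h | ⟨i, hi, heq⟩)
    · exact hxd h
    · exact hxqi i (by omega) heq.symm
  have hcard : n + 3 ≤ Fintype.card σ := by
    have h1 : (insert x (insert d S0)).card = n + 3 := by
      rw [Finset.card_insert_of_notMem hxS1, Finset.card_insert_of_notMem hdS0, hS0card]
    calc n + 3 = (insert x (insert d S0)).card := h1.symm
      _ ≤ Fintype.card σ := Finset.card_le_univ _ |>.trans (le_of_eq (Finset.card_univ))
  exact hcard

/-- Every minimal acyclic DFA recognizing a nonempty finite language that is
not linear is composite: its language is the intersection of the language of words of
length at most `n` with the complements of the singletons `{u}` for each rejected word `u`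
of length at most `n`; each DFA involved has at most `n + 2` states, and `n + 2 < ind(A)`. -/
theorem stmt5 {α σ : Type} [Fintype σ] (A : DFA α σ)
    (hmin : DFAMinimal A) (hacyc : DFAAcyclic A)
    (hfin : {w : List α | w ∈ A.accepts}.Finite)
    (hne : ∃ w : List α, w ∈ A.accepts)
    (n : ℕ) (hbound : ∀ w ∈ A.accepts, List.length w ≤ n)
    (hmax : ∃ w ∈ A.accepts, List.length w = n)
    (hnotlin : ¬ DFALinear A) :
    DFAComposite A ∧
    n + 2 < Ind A.accepts ∧
    (∀ w : List α, w ∈ A.accepts ↔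
      (w.length ≤ n ∧ ∀ u : List α, u ∉ A.accepts → u.length ≤ n → w ≠ u)) ∧
    (∃ B : DFA α (Fin (n + 2)), ∀ w : List α, w ∈ B.accepts ↔ w.length ≤ n) ∧
    (∀ u : List α, u ∉ A.accepts → u.length ≤ n →
      ∃ B : DFA α (Fin (n + 2)), ∀ w : List α, w ∈ B.accepts ↔ w ≠ u) := by
  classical
  set c : α → (σ → σ) := fun a s => A.step s a with hc
  have hmapeval : ∀ (u v : List α) (q : σ),
      u.map c = v.map c → A.evalFrom q u = A.evalFrom q v := by
    intro u
    induction u with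
    | nil =>
        intro v q h
        rw [List.map_nil] at h
        have hv : v = [] := List.map_eq_nil_iff.mp h.symm
        rw [hv]
    | cons a u' ih =>
        intro v q h
        cases v with
        | nil => simp at h
        | cons b v' =>
            simp only [List.map_cons, List.cons.injEq] at h
            show A.evalFrom (A.step q a) u' = A.evalFrom (A.step q b) v'
            have hstep : A.step q a = A.step q b := by
              have := congrFun h.1 q
              simpa [hc] using this
            rw [hstep]
            exact ih v' (A.step q b) h.2
  have hcard : n + 3 ≤ Fintype.card σ := chain_card A hmin hacyc hne n hbound hmax hnotlin
  have hind : Fintype.card σ ≤ Ind A.accepts := ind_ge_card A hmin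
  refine ⟨?_, by omega, ?_, ?_, ?_⟩
  · -- composite
    have hMfin : {l : List (σ → σ) |
        ∃ u : List α, u ∉ A.accepts ∧ u.length ≤ n ∧ u.map c = l}.Finite :=
      Set.Finite.subset (List.finite_length_le (σ → σ) n)
        (by rintro l ⟨u, _, hul, rfl⟩; simpa using hul)
    have hms_mem : ∀ l ∈ hMfin.toFinset.toList,
        l.length ≤ n ∧ ∃ u : List α, u ∉ A.accepts ∧ u.map c = l := by
      intro l hl
      rw [Finset.mem_toList, Set.Finite.mem_toFinset] at hl
      obtain ⟨u, hu, hul, hmap⟩ := hl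
      exact ⟨by rw [← hmap]; simpa using hul, u, hu, hmap⟩
    refine ⟨(hMfin.toFinset.toList).length, fun _ => n + 2,
      Fin.cases (lenDFA α n) (fun j => compDFA c (hMfin.toFinset.toList.get j) n),
      fun _ => (by omega : n + 2 ≤ Ind A.accepts - 1), ?_⟩
    intro w'
    constructor
    · intro hw' i
      induction i using Fin.cases with
      | zero =>
          simp only [Fin.cases_zero]
          exact (lenDFA_accepts n w').mpr (hbound w' hw')
      | succ j =>
          simp only [Fin.cases_succ]
          have hmem := hms_mem _ (List.get_mem hMfin.toFinset.toList j)
          rw [compDFA_accepts c _ n hmem.1]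
          intro heq
          obtain ⟨-, u, hu, hmap⟩ := hmem
          have hmaps : w'.map c = u.map c := by rw [heq, hmap]
          have heval : A.evalFrom A.start w' = A.evalFrom A.start u := hmapeval _ _ _ hmaps
          exact hu (by rwa [DFA.mem_accepts, DFA.eval, ← heval])
    · intro hall
      have h0 := hall 0
      simp only [Fin.cases_zero] at h0
      rw [lenDFA_accepts] at h0
      by_contra hw'
      have hmem : w'.map c ∈ hMfin.toFinset.toList := by
        rw [Finset.mem_toList, Set.Finite.mem_toFinset]
        exact ⟨w', hw', h0, rfl⟩
      obtain ⟨j, hj⟩ := List.get_of_mem hmem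
      have hj' := hall j.succ
      simp only [Fin.cases_succ] at hj'
      rw [compDFA_accepts c _ n (hms_mem _ (List.get_mem _ j)).1] at hj'
      exact hj' hj.symm
  · -- characterization
    intro w'
    constructor
    · intro hw'
      exact ⟨hbound w' hw', fun u hu _ hwu => hu (hwu ▸ hw')⟩
    · rintro ⟨h1, h2⟩
      by_contra hw'
      exact h2 w' hw' h1 rfl
  · -- length DFA
    exact ⟨lenDFA α n, fun w' => lenDFA_accepts n w'⟩
  · -- complement singleton DFAs
    intro u hu hul
    refine ⟨compDFA (id : α → α) u n, fun w' => ?_⟩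
    have h := compDFA_accepts (id : α → α) u n hul w'
    simpa using h
end

section
/- Let A be a minimal linear acyclic DFA recognizing a nonempty finite language with longest word length n, and suppose σ^n ∈ L(A) for some letter σ. Then the word σ^{n+(n+1)!} is accepted by every DFA B with fewer than n+2 states satisfying L(A) ⊆ L(B); hence A is prime. -/
/-- A state is useful if it is reachable from the start and can reach an accepting state. -/
def UsefulState {α σ : Type} (A : DFA α σ) (q : σ) : Prop :=
  ReachableFrom A A.start q ∧ ∃ w : List α, A.evalFrom q w ∈ A.accept

/-- Pumping: a DFA with fewer than `n+2` states accepting `a^n` accepts `a^(n+(n+1)!)`. -/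
lemma pump_lemma {α : Type} {m n : ℕ} (B : DFA α (Fin m)) (hm : m < n + 2) (a : α)
    (hacc : List.replicate n a ∈ B.accepts) :
    List.replicate (n + Nat.factorial (n + 1)) a ∈ B.accepts := by
  let r : ℕ → Fin m := fun t => B.eval (List.replicate t a)
  have key : ∀ s t : ℕ, r (s + t) = B.evalFrom (r s) (List.replicate t a) := by
    intro s t
    simp only [r, DFA.eval, List.replicate_add, DFA.evalFrom_of_append]
  obtain ⟨i, j, hlt, hle, heq⟩ : ∃ i j : ℕ, i < j ∧ j ≤ n + 1 ∧ r i = r j := by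
    obtain ⟨i, j, hij, heq⟩ :=
      Fintype.exists_ne_map_eq_of_card_lt (fun i : Fin (n + 2) => r i.1) (by simpa using hm)
    rcases lt_or_gt_of_ne hij with h | h
    · exact ⟨i.1, j.1, h, by omega, heq⟩
    · exact ⟨j.1, i.1, h, by omega, heq.symm⟩
  have hp : 0 < j - i := by omega
  have hple : j - i ≤ n + 1 := by omega
  have shift : ∀ s, i ≤ s → r (s + (j - i)) = r s := by
    intro s hs
    have h1 : s + (j - i) = j + (s - i) := by omega
    have h2 : i + (s - i) = s := by omega
    rw [h1, key, ← heq, ← key, h2]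
  have per : ∀ c, r (n + c * (j - i)) = r n := by
    intro c
    induction c with
    | zero => simp
    | succ c ih =>
      have h3 : n + (c + 1) * (j - i) = (n + c * (j - i)) + (j - i) := by ring
      have h4 : i ≤ n + c * (j - i) := le_trans (by omega) (Nat.le_add_right _ _)
      rw [h3, shift _ h4, ih]
  have hc : Nat.factorial (n + 1) = (Nat.factorial (n + 1) / (j - i)) * (j - i) :=
    (Nat.div_mul_cancel (Nat.dvd_factorial hp hple)).symm
  have hfin : r (n + Nat.factorial (n + 1)) = r n := by rw [hc]; exact per _
  rw [DFA.mem_accepts] at hacc ⊢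
  show r (n + Nat.factorial (n + 1)) ∈ B.accept
  exact hfin ▸ hacc

/-- A linear DFA recognizing a language whose words have length at most `n` has an
equivalent DFA with at most `n + 2` states (useful states plus a sink). -/
lemma exists_small_dfa {α σ : Type} [Fintype σ] (A : DFA α σ)
    (hlin : DFALinear A) (hne : ∃ w : List α, w ∈ A.accepts)
    (n : ℕ) (hbound : ∀ w ∈ A.accepts, List.length w ≤ n) :
    ∃ N : ℕ, N ≤ n + 2 ∧ ∃ B : DFA α (Fin N), B.accepts = A.accepts := by
  classical
  obtain ⟨w₀, hw₀⟩ := hne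
  have hstart : UsefulState A A.start := ⟨⟨[], rfl⟩, ⟨w₀, hw₀⟩⟩
  set U := {q : σ // UsefulState A q} with hU
  haveI : Fintype U := Fintype.ofFinite U
  let φ : σ → Option U := fun q => if h : UsefulState A q then some ⟨q, h⟩ else none
  let B : DFA α (Option U) :=
    { step := fun s x => s.bind fun q =>
        if h : UsefulState A (A.step q.1 x) then some ⟨A.step q.1 x, h⟩ else none
      start := some ⟨A.start, hstart⟩
      accept := {s | ∃ q : U, s = some q ∧ q.1 ∈ A.accept} }
  have step_comm : ∀ (q : σ) (x : α), ReachableFrom A A.start q →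
      B.step (φ q) x = φ (A.step q x) := by
    intro q x hr
    by_cases h : UsefulState A q
    · simp only [φ, dif_pos h]
      rfl
    · have h2 : ¬ UsefulState A (A.step q x) := by
        rintro ⟨-, w, hw⟩
        exact h ⟨hr, x :: w, hw⟩
      simp only [φ, dif_neg h, dif_neg h2]
      rfl
  have reach_step : ∀ (q : σ) (x : α), ReachableFrom A A.start q →
      ReachableFrom A A.start (A.step q x) := by
    rintro q x ⟨u, hu⟩
    exact ⟨u ++ [x], by rw [DFA.evalFrom_append_singleton, hu]⟩
  have inv : ∀ (w : List α) (q : σ), ReachableFrom A A.start q →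
      B.evalFrom (φ q) w = φ (A.evalFrom q w) := by
    intro w
    induction w with
    | nil => intro q _; rfl
    | cons x w ih =>
      intro q hr
      have e1 : B.evalFrom (φ q) (x :: w) = B.evalFrom (B.step (φ q) x) w := rfl
      rw [e1, step_comm q x hr, ih _ (reach_step q x hr)]
      rfl
  have haccB : B.accepts = A.accepts := by
    ext w
    have hBev : B.eval w = φ (A.eval w) := by
      have : B.start = φ A.start := by simp only [φ, dif_pos hstart]; rfl
      show B.evalFrom B.start w = _
      rw [this]
      exact inv w A.start ⟨[], rfl⟩
    rw [DFA.mem_accepts, DFA.mem_accepts, hBev]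
    constructor
    · rintro ⟨q, hq, hacc⟩
      by_cases h : UsefulState A (A.eval w)
      · simp only [φ, dif_pos h] at hq
        obtain rfl : q = ⟨A.eval w, h⟩ := (Option.some_injective _ hq).symm
        exact hacc
      · simp only [φ, dif_neg h] at hq
        exact absurd hq (by simp)
    · intro hacc
      have h : UsefulState A (A.eval w) := ⟨⟨w, rfl⟩, ⟨[], hacc⟩⟩
      exact ⟨⟨A.eval w, h⟩, by simp only [φ, dif_pos h], hacc⟩
  let H : σ → ℕ := fun q => sSup {l | ∃ w : List α, w.length = l ∧ A.evalFrom q w ∈ A.accept}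
  have hbdd : ∀ q : σ, UsefulState A q →
      ∀ l ∈ {l | ∃ w : List α, w.length = l ∧ A.evalFrom q w ∈ A.accept}, l ≤ n := by
    rintro q ⟨⟨u, hu⟩, -⟩ l ⟨w, rfl, hw⟩
    have : u ++ w ∈ A.accepts := by
      rw [DFA.mem_accepts, DFA.eval, DFA.evalFrom_of_append, hu]
      exact hw
    have := hbound _ this
    simp at this
    omega
  have hmem : ∀ q : σ, (h : UsefulState A q) →
      H q ∈ {l | ∃ w : List α, w.length = l ∧ A.evalFrom q w ∈ A.accept} := by
    intro q h
    refine Nat.sSup_mem ?_ ⟨n, fun l hl => hbdd q h l hl⟩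
    obtain ⟨-, w, hw⟩ := h
    exact ⟨w.length, w, rfl, hw⟩
  have hHle : ∀ q : σ, UsefulState A q → H q ≤ n := fun q h => hbdd q h _ (hmem q h)
  have hstrict : ∀ q q' : σ, UsefulState A q → UsefulState A q' → q ≠ q' →
      ReachableFrom A q q' → H q' < H q := by
    rintro q q' h h' hne' ⟨p, hp⟩
    have hpne : p ≠ [] := by rintro rfl; exact hne' hp
    obtain ⟨w', hw'len, hw'⟩ := hmem q' h'
    have hmem2 : p.length + H q' ∈
        {l | ∃ w : List α, w.length = l ∧ A.evalFrom q w ∈ A.accept} := by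
      refine ⟨p ++ w', by simp [hw'len], ?_⟩
      rw [DFA.evalFrom_of_append, hp]
      exact hw'
    have : p.length + H q' ≤ H q :=
      le_csSup ⟨n, fun l hl => hbdd q h l hl⟩ hmem2
    have : 1 ≤ p.length := List.length_pos_iff.2 hpne
    omega
  have hinj : Function.Injective (fun u : U => (⟨H u.1, by
      have := hHle u.1 u.2; omega⟩ : Fin (n + 1))) := by
    rintro u v huv
    by_contra hne'
    have h1 : u.1 ≠ v.1 := fun h => hne' (Subtype.ext h)
    have hHeq : H u.1 = H v.1 := by
      have := congrArg Fin.val huv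
      simpa using this
    rcases hlin u.1 v.1 h1 with ⟨hr, -⟩ | ⟨hr, -⟩
    · exact absurd hHeq (Nat.ne_of_lt (hstrict u.1 v.1 u.2 v.2 h1 hr)).symm
    · exact absurd hHeq (Nat.ne_of_lt (hstrict v.1 u.1 v.2 u.2 h1.symm hr))
  have hcardU : Fintype.card U ≤ n + 1 := by
    have := Fintype.card_le_of_injective _ hinj
    simpa using this
  refine ⟨Fintype.card (Option U), by simp [Fintype.card_option]; omega,
    DFA.reindex (Fintype.equivFin (Option U)) B, ?_⟩
  rw [DFA.accepts_reindex, haccB]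

/-- For a minimal linear acyclic DFA `A` recognizing a nonempty finite
language with longest word length `n` and `σ^n ∈ L(A)`, the word `σ^(n+(n+1)!)` is accepted
by every DFA with fewer than `n + 2` states whose language contains `L(A)`; hence `A` is
prime. -/
theorem stmt7 {α σ : Type} [Fintype σ] (A : DFA α σ)
    (hmin : DFAMinimal A) (hlin : DFALinear A) (hacyc : DFAAcyclic A)
    (hfin : {w : List α | w ∈ A.accepts}.Finite)
    (hne : ∃ w : List α, w ∈ A.accepts)
    (n : ℕ) (hbound : ∀ w ∈ A.accepts, List.length w ≤ n)
    (hmax : ∃ w ∈ A.accepts, List.length w = n)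
    (a : α) (ha : List.replicate n a ∈ A.accepts) :
    (∀ (m : ℕ) (B : DFA α (Fin m)), m < n + 2 →
      (∀ w : List α, w ∈ A.accepts → w ∈ B.accepts) →
      List.replicate (n + Nat.factorial (n + 1)) a ∈ B.accepts) ∧
    ¬ DFAComposite A := by
  have part1 : ∀ (m : ℕ) (B : DFA α (Fin m)), m < n + 2 →
      (∀ w : List α, w ∈ A.accepts → w ∈ B.accepts) →
      List.replicate (n + Nat.factorial (n + 1)) a ∈ B.accepts := by
    intro m B hm hsub
    exact pump_lemma B hm a (hsub _ ha)
  refine ⟨part1, ?_⟩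
  rintro ⟨t, sz, Bs, hsz, hiff⟩
  obtain ⟨N, hN, B', hB'⟩ := exists_small_dfa A hlin hne n hbound
  have hInd : Ind A.accepts ≤ n + 2 :=
    le_trans (Nat.sInf_le ⟨B', hB'⟩) hN
  have hmem : List.replicate (n + Nat.factorial (n + 1)) a ∈ A.accepts :=
    (hiff _).2 fun i => part1 _ (Bs i) (by have := hsz i; omega)
      (fun w hw => (hiff w).1 hw i)
  have hlen := hbound _ hmem
  have hfact := Nat.factorial_pos (n + 1)
  simp only [List.length_replicate] at hlen
  omega
end

section
/- Let A be a minimal acyclic DFA recognizing a nonempty finite language with longest word length n. For a word w ∈ Σ^n with w ∉ L(A), the DFA A_w^! that rejects exactly the words containing w as a subsequence has n+1 states and satisfies L(A) ⊆ L(A_w^!); hence A_w^! ∈ α(A). -/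
/-!
`subseqDFA w`, the paper's `A_w^!`, follows the greedy embedding of `w`: it moves from state
`i` to `i + 1` exactly when it reads `w[i]`, so it reaches its last state iff `w` is a subsequence of the input. A word of
`L(A)` is no longer than `w` and different from it, hence does not contain it as a subsequence.

For the index bound, let `x ∈ L(A)` have length `n`. The `n + 1` states that `A` visits while
reading `x` are not rejecting sinks (from each of them `A` still accepts), and they are pairwise
distinct, since a repetition would be a cycle through a non-sink state. Iterating a single letter
from the start must eventually cycle, which produces a rejecting sink; so `A` has at least
`n + 2` states, and by minimality this is at most the index of `L(A)`.
-/

variable {α σ : Type}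

namespace List

theorem drop_sublist_cons_iff_of_getElem?_ne {w u : List α} {i : ℕ} {a : α}
    (h : w[i]? ≠ some a) : (w.drop i).Sublist (a :: u) ↔ (w.drop i).Sublist u := by
  refine ⟨fun hsub => ?_, fun hsub => hsub.cons a⟩
  rcases sublist_cons_iff.mp hsub with hsub | ⟨r, hdrop, -⟩
  · exact hsub
  · exact absurd (by rw [← head?_drop, hdrop]; rfl) h

end List

def subseqDFA [DecidableEq α] (w : List α) : DFA α (Fin (w.length + 1)) where
  step i a :=
    if h : w[(i : ℕ)]? = some a then ⟨i + 1, by grind [List.getElem?_eq_some_iff]⟩ else i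
  start := 0
  accept := {i | i ≠ Fin.last _}

section subseqDFA

variable [DecidableEq α] (w : List α)

theorem subseqDFA_evalFrom_eq_last_iff (u : List α) (i : Fin (w.length + 1)) :
    (subseqDFA w).evalFrom i u = Fin.last _ ↔ (w.drop i).Sublist u := by
  induction u generalizing i with
  | nil =>
    simp only [DFA.evalFrom_nil, Fin.ext_iff, Fin.val_last, List.sublist_nil,
      List.drop_eq_nil_iff]
    omega
  | cons a u ih =>
    rw [DFA.evalFrom_cons]
    by_cases h : w[(i : ℕ)]? = some a
    · obtain ⟨hi, rfl⟩ := List.getElem?_eq_some_iff.mp h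
      have hstep : (subseqDFA w).step i w[(i : ℕ)] = ⟨i + 1, by omega⟩ := dif_pos h
      rw [hstep, ih, List.drop_eq_getElem_cons hi, List.cons_sublist_cons]
    · have hstep : (subseqDFA w).step i a = i := dif_neg h
      rw [hstep, ih, List.drop_sublist_cons_iff_of_getElem?_ne h]

theorem mem_accepts_subseqDFA_iff (u : List α) :
    u ∈ (subseqDFA w).accepts ↔ ¬ w.Sublist u := by
  have h := subseqDFA_evalFrom_eq_last_iff w u 0
  rw [Fin.val_zero, List.drop_zero] at h
  exact h.not

end subseqDFA

theorem IsRejectingSink.evalFrom_eq {A : DFA α σ} {q : σ} (hq : IsRejectingSink A q)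
    (u : List α) : A.evalFrom q u = q := by
  induction u with
  | nil => rfl
  | cons a u ih => rw [DFA.evalFrom_cons, hq.2 a, ih]

theorem not_isRejectingSink_eval_take {A : DFA α σ} {x : List α} (hx : x ∈ A.accepts)
    (i : ℕ) : ¬ IsRejectingSink A (A.eval (x.take i)) := fun hsink => by
  rw [DFA.mem_accepts, ← x.take_append_drop i, DFA.eval, DFA.evalFrom_of_append] at hx
  exact hsink.1 (hsink.evalFrom_eq _ ▸ hx)

namespace DFAAcyclic

variable {A : DFA α σ}

theorem exists_isRejectingSink [Finite σ] [Nonempty α] (hA : DFAAcyclic A) :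
    ∃ q, IsRejectingSink A q := by
  obtain ⟨a⟩ := ‹Nonempty α›
  obtain ⟨k, m, hkm, heq⟩ :=
    Finite.exists_ne_map_eq_of_infinite fun k : ℕ => A.eval (List.replicate k a)
  wlog hlt : k < m generalizing k m
  · exact this m k hkm.symm heq.symm (by omega)
  refine ⟨_, hA (A.eval (List.replicate k a)) (List.replicate (m - k) a)
    (by rw [Ne, List.replicate_eq_nil_iff]; omega) ?_⟩
  rw [DFA.eval, ← DFA.evalFrom_of_append, ← List.replicate_add, Nat.add_sub_cancel' hlt.le]
  exact heq.symm

theorem eval_take_injOn (hA : DFAAcyclic A) {x : List α} (hx : x ∈ A.accepts) :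
    Set.InjOn (fun i => A.eval (x.take i)) (Set.Iic x.length) := by
  suffices ∀ i j, i < j → j ≤ x.length → A.eval (x.take i) ≠ A.eval (x.take j) by
    intro i hi j hj heq
    by_contra hne
    rcases Nat.lt_or_gt_of_ne hne with h | h
    · exact this i j h hj heq
    · exact this j i h hi heq.symm
  intro i j hij hj heq
  have hsplit : x.take i ++ (x.take j).drop i = x.take j := by
    conv_rhs => rw [← List.take_append_drop i (x.take j)]
    rw [List.take_take, min_eq_left hij.le]
  have hcycle : A.evalFrom (A.eval (x.take i)) ((x.take j).drop i) = A.eval (x.take i) := by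
    rw [DFA.eval, ← DFA.evalFrom_of_append, hsplit]
    exact heq.symm
  refine not_isRejectingSink_eval_take hx i (hA _ _ ?_ hcycle)
  rw [← List.length_pos_iff, List.length_drop, List.length_take]
  omega

theorem length_add_two_le_card [Fintype σ] [Nonempty α] (hA : DFAAcyclic A) {x : List α}
    (hx : x ∈ A.accepts) : x.length + 2 ≤ Fintype.card σ := by
  classical
  obtain ⟨q, hq⟩ := hA.exists_isRejectingSink
  let path := (Finset.range (x.length + 1)).image fun i => A.eval (x.take i)
  have hpath : path.card = x.length + 1 := by
    rw [Finset.card_image_of_injOn, Finset.card_range]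
    intro i hi j hj
    simp only [Finset.coe_range, Set.mem_Iio, Nat.lt_succ_iff] at hi hj
    exact hA.eval_take_injOn hx hi hj
  have hq_notMem : q ∉ path := by
    simp only [path, Finset.mem_image, not_exists, not_and]
    exact fun i _ heq => not_isRejectingSink_eval_take hx i (heq ▸ hq)
  calc x.length + 2 = (insert q path).card := by
        rw [Finset.card_insert_of_notMem hq_notMem, hpath]
    _ ≤ Fintype.card σ := Finset.card_le_univ _

end DFAAcyclic

theorem DFAMinimal.card_le_ind [Fintype σ] {A : DFA α σ} (hA : DFAMinimal A) :
    Fintype.card σ ≤ Ind A.accepts :=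
  hA _ <| Nat.sInf_mem (s := {n | ∃ B : DFA α (Fin n), B.accepts = A.accepts})
    ⟨_, A.reindex (Fintype.equivFin σ), DFA.accepts_reindex A _⟩

theorem stmt8_general {α σ : Type} [Fintype σ] (A : DFA α σ)
    (hmin : DFAMinimal A) (hacyc : DFAAcyclic A)
    (n : ℕ) (hbound : ∀ w ∈ A.accepts, List.length w ≤ n)
    (hmax : ∃ w ∈ A.accepts, List.length w = n)
    (w : List α) (hwlen : w.length = n) (hwnot : w ∉ A.accepts) :
    ∃ B : DFA α (Fin (n + 1)),
      (∀ u : List α, u ∈ B.accepts ↔ ¬ w.Sublist u) ∧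
      (∀ u : List α, u ∈ A.accepts → u ∈ B.accepts) ∧
      n + 1 < Ind A.accepts := by
  classical
  subst hwlen
  obtain ⟨x, hx, hxlen⟩ := hmax
  have hx_ne : x ≠ [] := by
    rintro rfl
    exact hwnot (List.length_eq_zero_iff.mp hxlen.symm ▸ hx)
  have : Nonempty α := ⟨x.head hx_ne⟩
  refine ⟨subseqDFA w, mem_accepts_subseqDFA_iff w, fun u hu => ?_, ?_⟩
  · rw [mem_accepts_subseqDFA_iff]
    exact fun hsub => hwnot (hsub.eq_of_length_le (hbound u hu) ▸ hu)
  · calc w.length + 1 < x.length + 2 := by omega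
      _ ≤ Fintype.card σ := hacyc.length_add_two_le_card hx
      _ ≤ Ind A.accepts := hmin.card_le_ind

/-- For a minimal linear acyclic DFA `A` (nonempty finite language, longest
word length `n`) and a rejected word `w` of length `n`, the DFA `A_w^!` rejecting exactly
the words containing `w` as a subsequence has `n + 1` states, its language contains `L(A)`,
and `n + 1 < ind(A)`; hence `A_w^! ∈ α(A)`. -/
theorem stmt8 {α σ : Type} [Fintype σ] (A : DFA α σ)
    (hmin : DFAMinimal A) (hlin : DFALinear A) (hacyc : DFAAcyclic A)
    (hfin : {w : List α | w ∈ A.accepts}.Finite)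
    (hne : ∃ w : List α, w ∈ A.accepts)
    (n : ℕ) (hbound : ∀ w ∈ A.accepts, List.length w ≤ n)
    (hmax : ∃ w ∈ A.accepts, List.length w = n)
    (w : List α) (hwlen : w.length = n) (hwnot : w ∉ A.accepts) :
    ∃ B : DFA α (Fin (n + 1)),
      (∀ u : List α, u ∈ B.accepts ↔ ¬ w.Sublist u) ∧
      (∀ u : List α, u ∈ A.accepts → u ∈ B.accepts) ∧
      n + 1 < Ind A.accepts :=
  stmt8_general A hmin hacyc n hbound hmax w hwlen hwnot
end

section
/- A minimal acyclic DFA A recognizing a nonempty finite language is union-prime if and only if A is linear. -/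
namespace S11

open scoped Classical

variable {α σ τ : Type}

lemma val_mk {n a : ℕ} (h : a < n) : ((⟨a, h⟩ : Fin n) : ℕ) = a := rfl

lemma evalFrom_nil (A : DFA α σ) (s : σ) : A.evalFrom s [] = s := rfl

lemma evalFrom_cons (A : DFA α σ) (s : σ) (a : α) (w : List α) :
    A.evalFrom s (a :: w) = A.evalFrom (A.step s a) w := rfl

lemma sink_eval (A : DFA α σ) {q : σ} (h : IsRejectingSink A q) (w : List α) :
    A.evalFrom q w = q := by
  induction w with
  | nil => rfl
  | cons a w ih => rw [evalFrom_cons, h.2 a]; exact ih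

lemma reach_refl (A : DFA α σ) (q : σ) : ReachableFrom A q q := ⟨[], rfl⟩

lemma reach_trans {A : DFA α σ} {a b c : σ}
    (h1 : ReachableFrom A a b) (h2 : ReachableFrom A b c) : ReachableFrom A a c := by
  obtain ⟨u, hu⟩ := h1; obtain ⟨v, hv⟩ := h2
  exact ⟨u ++ v, by rw [DFA.evalFrom_of_append, hu, hv]⟩

lemma reach_step (A : DFA α σ) (q : σ) (a : α) : ReachableFrom A q (A.step q a) := ⟨[a], rfl⟩

lemma reach_antisymm {A : DFA α σ} (hacyc : DFAAcyclic A) {q q' : σ}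
    (h1 : ReachableFrom A q q') (h2 : ReachableFrom A q' q) : q = q' := by
  by_contra hne
  obtain ⟨u, hu⟩ := h1; obtain ⟨v, hv⟩ := h2
  have hu0 : u ≠ [] := by rintro rfl; exact hne hu
  have hcyc : A.evalFrom q (u ++ v) = q := by rw [DFA.evalFrom_of_append, hu, hv]
  have hs := hacyc q (u ++ v) (by simp [hu0]) hcyc
  rw [sink_eval A hs u] at hu; exact hne hu

def mapDFA (A : DFA α σ) (e : σ ≃ τ) : DFA α τ where
  step t a := e (A.step (e.symm t) a)
  start := e A.start
  accept := {t | e.symm t ∈ A.accept}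

lemma mapDFA_evalFrom (A : DFA α σ) (e : σ ≃ τ) (s : σ) (w : List α) :
    (mapDFA A e).evalFrom (e s) w = e (A.evalFrom s w) := by
  induction w generalizing s with
  | nil => rfl
  | cons a w ih =>
      rw [evalFrom_cons, evalFrom_cons]
      have : (mapDFA A e).step (e s) a = e (A.step s a) := by simp [mapDFA]
      rw [this, ih]

lemma mapDFA_accepts (A : DFA α σ) (e : σ ≃ τ) : (mapDFA A e).accepts = A.accepts := by
  ext w
  rw [DFA.mem_accepts, DFA.mem_accepts]
  show (mapDFA A e).evalFrom (mapDFA A e).start w ∈ _ ↔ _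
  have : (mapDFA A e).start = e A.start := rfl
  rw [this, mapDFA_evalFrom]
  simp [mapDFA]
  rfl

lemma all_reachable [Fintype σ] (A : DFA α σ) (hmin : DFAMinimal A) (s : σ) :
    ReachableFrom A A.start s := by
  by_contra hs
  classical
  let A' : DFA α {t : σ // ReachableFrom A A.start t} :=
    ⟨fun t a => ⟨A.step t.1 a, reach_trans t.2 (reach_step A t.1 a)⟩,
     ⟨A.start, reach_refl A _⟩, {t | t.1 ∈ A.accept}⟩
  have heval : ∀ (w : List α) (t : {t : σ // ReachableFrom A A.start t}),
      (A'.evalFrom t w).1 = A.evalFrom t.1 w := by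
    intro w
    induction w with
    | nil => intro t; rfl
    | cons a w ih => intro t; rw [evalFrom_cons, evalFrom_cons]; exact ih _
  have hacc : A'.accepts = A.accepts := by
    ext w
    rw [DFA.mem_accepts, DFA.mem_accepts]
    show A'.evalFrom A'.start w ∈ {t : {t : σ // ReachableFrom A A.start t} | t.1 ∈ A.accept} ↔ _
    constructor
    · intro h; rwa [Set.mem_setOf_eq, heval] at h
    · intro h; rw [Set.mem_setOf_eq, heval]; exact h
  have hB : ∃ B : DFA α (Fin (Fintype.card {t : σ // ReachableFrom A A.start t})),
      B.accepts = A.accepts := ⟨mapDFA A' (Fintype.equivFin _), by rw [mapDFA_accepts, hacc]⟩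
  have := hmin _ hB
  have hlt : Fintype.card {t : σ // ReachableFrom A A.start t} < Fintype.card σ :=
    Fintype.card_subtype_lt (x := s) hs
  omega

lemma exists_sink [Fintype σ] (A : DFA α σ) (hacyc : DFAAcyclic A) (a₀ : α) (s : σ) :
    ∃ d, IsRejectingSink A d ∧ ReachableFrom A s d := by
  obtain ⟨k, k', hkk, hf⟩ :=
    Finite.exists_ne_map_eq_of_infinite (fun k : ℕ => A.evalFrom s (List.replicate k a₀))
  wlog hlt : k < k' generalizing k k'
  · exact this k' k hkk.symm hf.symm (by omega)
  refine ⟨A.evalFrom s (List.replicate k a₀), ?_, ⟨_, rfl⟩⟩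
  apply hacyc _ (List.replicate (k' - k) a₀)
  · simp; omega
  · rw [← DFA.evalFrom_of_append, ← List.replicate_add]
    have : k + (k' - k) = k' := by omega
    rw [this]; exact hf.symm

def rep (k : ℕ) (y : List α) : List α := match k with
  | 0 => []
  | k + 1 => y ++ rep k y

lemma rep_eval (A : DFA α σ) {p : σ} {y : List α} (h : A.evalFrom p y = p) (k : ℕ) :
    A.evalFrom p (rep k y) = p := by
  induction k with
  | zero => rfl
  | succ k ih => rw [rep, DFA.evalFrom_of_append, h, ih]

lemma rep_length (k : ℕ) (y : List α) : (rep k y).length = k * y.length := by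
  induction k with
  | zero => simp [rep]
  | succ k ih => rw [rep, List.length_append, ih]; ring

noncomputable def prune (A : DFA α σ) (x z : σ) (hzx : z ≠ x) (hsx : A.start ≠ x) : DFA α {s : σ // s ≠ x} where
  step s a := if h : A.step s.1 a = x then ⟨z, hzx⟩ else ⟨A.step s.1 a, h⟩
  start := ⟨A.start, hsx⟩
  accept := {s | s.1 ∈ A.accept}

lemma prune_sink (A : DFA α σ) (x z : σ) (hzx : z ≠ x) (hsx : A.start ≠ x)
    (hz : IsRejectingSink A z) : IsRejectingSink (prune A x z hzx hsx) (⟨z, hzx⟩ : {s : σ // s ≠ x}) := by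
  constructor
  · exact hz.1
  · intro a
    have h1 : A.step z a ≠ x := by rw [hz.2 a]; exact hzx
    have : (prune A x z hzx hsx).step ⟨z, hzx⟩ a = ⟨A.step z a, h1⟩ := by
      unfold prune; exact dif_neg h1
    rw [this]
    exact Subtype.ext (hz.2 a)

lemma prune_step_ne (A : DFA α σ) (x z : σ) (hzx : z ≠ x) (hsx : A.start ≠ x)
    {s : σ} (hs : s ≠ x) {a : α} (h1 : A.step s a ≠ x) :
    (prune A x z hzx hsx).step ⟨s, hs⟩ a = ⟨A.step s a, h1⟩ := by
  unfold prune; exact dif_neg h1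

lemma prune_step_eq (A : DFA α σ) (x z : σ) (hzx : z ≠ x) (hsx : A.start ≠ x)
    {s : σ} (hs : s ≠ x) {a : α} (h1 : A.step s a = x) :
    (prune A x z hzx hsx).step ⟨s, hs⟩ a = ⟨z, hzx⟩ := by
  unfold prune; exact dif_pos h1

lemma prune_eval_of_avoid (A : DFA α σ) (x z : σ) (hzx : z ≠ x) (hsx : A.start ≠ x) :
    ∀ (w : List α) (s : σ) (hs : s ≠ x), (∀ j : ℕ, A.evalFrom s (w.take j) ≠ x) →
    ((prune A x z hzx hsx).evalFrom ⟨s, hs⟩ w).1 = A.evalFrom s w := by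
  intro w
  induction w with
  | nil => intro s hs h; rfl
  | cons a w ih =>
      intro s hs h
      have h1 : A.step s a ≠ x := by
        have := h 1
        simpa [List.take, evalFrom_cons, evalFrom_nil] using this
      rw [evalFrom_cons, evalFrom_cons, prune_step_ne A x z hzx hsx hs h1]
      exact ih (A.step s a) h1 (fun j => by
        have := h (j + 1)
        simpa [List.take, evalFrom_cons] using this)

lemma prune_sound (A : DFA α σ) (x z : σ) (hzx : z ≠ x) (hsx : A.start ≠ x)
    (hz : IsRejectingSink A z) :
    ∀ (w : List α) (s : σ) (hs : s ≠ x),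
      (prune A x z hzx hsx).evalFrom ⟨s, hs⟩ w ∈ (prune A x z hzx hsx).accept →
      A.evalFrom s w ∈ A.accept := by
  intro w
  induction w with
  | nil => intro s hs h; exact h
  | cons a w ih =>
      intro s hs h
      rw [evalFrom_cons] at h ⊢
      by_cases hx : A.step s a = x
      · exfalso
        rw [prune_step_eq A x z hzx hsx hs hx] at h
        rw [sink_eval _ (prune_sink A x z hzx hsx hz) w] at h
        exact hz.1 h
      · rw [prune_step_ne A x z hzx hsx hs hx] at h
        exact ih _ hx h

lemma mem_accepts' (A : DFA α σ) (w : List α) :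
    w ∈ A.accepts ↔ A.evalFrom A.start w ∈ A.accept := Iff.rfl

lemma prune_accepts_sub (A : DFA α σ) (x z : σ) (hzx : z ≠ x) (hsx : A.start ≠ x)
    (hz : IsRejectingSink A z) (w : List α)
    (h : w ∈ (prune A x z hzx hsx).accepts) : w ∈ A.accepts :=
  (mem_accepts' A w).mpr (prune_sound A x z hzx hsx hz w A.start hsx h)

lemma prune_accepts_of_avoid (A : DFA α σ) (x z : σ) (hzx : z ≠ x) (hsx : A.start ≠ x)
    (w : List α) (hw : w ∈ A.accepts) (hav : ∀ j : ℕ, A.evalFrom A.start (w.take j) ≠ x) :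
    w ∈ (prune A x z hzx hsx).accepts := by
  have := prune_eval_of_avoid A x z hzx hsx w A.start hsx hav
  show ((prune A x z hzx hsx).evalFrom ⟨A.start, hsx⟩ w).1 ∈ A.accept
  rw [this]
  exact (mem_accepts' A w).mp hw

lemma prune_accepts_eq (A : DFA α σ) (x z : σ) (hzx : z ≠ x) (hsx : A.start ≠ x)
    (hz : IsRejectingSink A z) (hdead : ∀ w : List α, A.evalFrom x w ∉ A.accept) :
    (prune A x z hzx hsx).accepts = A.accepts := by
  ext w
  constructor
  · exact prune_accepts_sub A x z hzx hsx hz w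
  · intro hw
    refine prune_accepts_of_avoid A x z hzx hsx w hw ?_
    intro j hj
    apply hdead (w.drop j)
    have : A.evalFrom A.start w ∈ A.accept := (mem_accepts' A w).mp hw
    rwa [← List.take_append_drop j w, DFA.evalFrom_of_append, hj] at this

lemma reach_of_prefix (A : DFA α σ) {s x y : σ} {w : List α} {j1 j2 : ℕ} (hj : j1 ≤ j2)
    (h1 : A.evalFrom s (w.take j1) = x) (h2 : A.evalFrom s (w.take j2) = y) :
    ReachableFrom A x y := by
  refine ⟨(w.take j2).drop j1, ?_⟩
  have htt : (w.take j2).take j1 = w.take j1 := by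
    rw [List.take_take, min_eq_left hj]
  have := List.take_append_drop j1 (w.take j2)
  rw [htt] at this
  rw [← h1, ← DFA.evalFrom_of_append, this, h2]

lemma ind_eq [Fintype σ] (A : DFA α σ) (hmin : DFAMinimal A) :
    sInf {n : ℕ | ∃ B : DFA α (Fin n), B.accepts = A.accepts} = Fintype.card σ := by
  have hmem : Fintype.card σ ∈ {n : ℕ | ∃ B : DFA α (Fin n), B.accepts = A.accepts} :=
    ⟨mapDFA A (Fintype.equivFin σ), mapDFA_accepts A _⟩
  exact le_antisymm (Nat.sInf_le hmem) (le_csInf ⟨_, hmem⟩ fun n hn => hmin n hn)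

end S11

set_option maxHeartbeats 1600000 in
/-- A minimal acyclic DFA recognizing a nonempty finite language is
union-prime iff it is linear. -/
theorem stmt11 {α σ : Type} [Fintype σ] (A : DFA α σ)
    (hmin : DFAMinimal A) (hacyc : DFAAcyclic A)
    (hfin : {w : List α | w ∈ A.accepts}.Finite)
    (hne : ∃ w : List α, w ∈ A.accepts) :
    ¬ UnionDecomp A.accepts (Ind A.accepts) ↔ DFALinear A := by
  classical
  have hind : Ind A.accepts = Fintype.card σ := S11.ind_eq A hmin
  have hn1 : 1 ≤ Fintype.card σ := Fintype.card_pos_iff.mpr ⟨A.start⟩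
  constructor
  · -- prime → linear
    intro hprime
    by_contra hnl
    apply hprime
    rw [hind]
    simp only [DFALinear, not_forall] at hnl
    obtain ⟨q, q', hnl⟩ := hnl
    obtain ⟨hne', hx⟩ := hnl
    have hnq : ¬ ReachableFrom A q q' ∧ ¬ ReachableFrom A q' q := by
      rcases Classical.em (ReachableFrom A q q') with h1 | h1 <;>
        rcases Classical.em (ReachableFrom A q' q) with h2 | h2
      · exact absurd (S11.reach_antisymm hacyc h1 h2) hne'
      · exact absurd (Or.inl ⟨h1, h2⟩) hx
      · exact absurd (Or.inr ⟨h2, h1⟩) hx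
      · exact ⟨h1, h2⟩
    have hqs : A.start ≠ q := fun h => hnq.1 (h ▸ S11.all_reachable A hmin q')
    have hq's : A.start ≠ q' := fun h => hnq.2 (h ▸ S11.all_reachable A hmin q)
    obtain ⟨w1, hw1⟩ := S11.all_reachable A hmin q
    have hw1ne : w1 ≠ [] := by rintro rfl; exact hqs hw1
    obtain ⟨a₀, w1', rfl⟩ := List.exists_cons_of_ne_nil hw1ne
    obtain ⟨d, hd, hdre⟩ := S11.exists_sink A hacyc a₀ q'
    have hdq : d ≠ q := fun h => hnq.2 (h ▸ hdre)
    obtain ⟨d', hd', hd're⟩ := S11.exists_sink A hacyc a₀ q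
    have hd'q' : d' ≠ q' := fun h => hnq.1 (h ▸ hd're)
    have hcover : ∀ w ∈ A.accepts, (∀ j : ℕ, A.evalFrom A.start (w.take j) ≠ q) ∨
        (∀ j : ℕ, A.evalFrom A.start (w.take j) ≠ q') := by
      intro w _
      by_contra hc
      push_neg at hc
      obtain ⟨⟨j1, h1⟩, ⟨j2, h2⟩⟩ := hc
      rcases le_total j1 j2 with h | h
      · exact hnq.1 (S11.reach_of_prefix A h h1 h2)
      · exact hnq.2 (S11.reach_of_prefix A h h2 h1)
    have hc1 : Fintype.card {s : σ // s ≠ q} = Fintype.card σ - 1 := by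
      have := Fintype.card_subtype_compl (fun s : σ => s = q)
      simp only [Fintype.card_subtype_eq] at this
      convert this using 2
    have hc2 : Fintype.card {s : σ // s ≠ q'} = Fintype.card σ - 1 := by
      have := Fintype.card_subtype_compl (fun s : σ => s = q')
      simp only [Fintype.card_subtype_eq] at this
      convert this using 2
    let M1 := S11.mapDFA (S11.prune A q d hdq hqs) (Fintype.equivFinOfCardEq hc1)
    let M2 := S11.mapDFA (S11.prune A q' d' hd'q' hq's) (Fintype.equivFinOfCardEq hc2)
    have hM1 : M1.accepts = (S11.prune A q d hdq hqs).accepts := S11.mapDFA_accepts _ _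
    have hM2 : M2.accepts = (S11.prune A q' d' hd'q' hq's).accepts := S11.mapDFA_accepts _ _
    refine ⟨1, fun _ => Fintype.card σ - 1, ![M1, M2],
      fun i => by show Fintype.card σ - 1 < Fintype.card σ; omega, ?_⟩
    intro w
    constructor
    · intro hw
      rcases hcover w hw with h | h
      · refine ⟨0, ?_⟩
        show w ∈ M1.accepts
        rw [hM1]
        exact S11.prune_accepts_of_avoid A q d hdq hqs w hw h
      · refine ⟨1, ?_⟩
        show w ∈ M2.accepts
        rw [hM2]
        exact S11.prune_accepts_of_avoid A q' d' hd'q' hq's w hw h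
    · rintro ⟨i, hi⟩
      fin_cases i
      · replace hi : w ∈ M1.accepts := hi
        rw [hM1] at hi
        exact S11.prune_accepts_sub A q d hdq hqs hd w hi
      · replace hi : w ∈ M2.accepts := hi
        rw [hM2] at hi
        exact S11.prune_accepts_sub A q' d' hd'q' hq's hd' w hi
  · -- linear → prime
    intro hlin hdec
    rw [hind] at hdec
    obtain ⟨t, sz, Bf, hsz, hiff⟩ := hdec
    obtain ⟨n, hnn⟩ : ∃ n, Fintype.card σ = n := ⟨_, rfl⟩
    rw [hnn] at hsz hn1
    by_cases hone : n = 1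
    · have h0 := hsz 0
      have h1 := (Bf 0).start.isLt
      omega
    have hn2 : 2 ≤ n := by omega
    -- a letter exists
    obtain ⟨q1, hq1⟩ := Fintype.exists_ne_of_one_lt_card (by omega) A.start
    obtain ⟨w1, hw1⟩ := S11.all_reachable A hmin q1
    have hw1ne : w1 ≠ [] := by rintro rfl; exact hq1 hw1.symm
    obtain ⟨a₀, w1', rfl⟩ := List.exists_cons_of_ne_nil hw1ne
    clear hw1 hq1
    -- linear order on states
    letI : LinearOrder σ :=
      { le := ReachableFrom A, le_refl := S11.reach_refl A,
        le_trans := fun a b c hab hbc => S11.reach_trans hab hbc,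
        le_antisymm := fun a b h1 h2 => S11.reach_antisymm hacyc h1 h2,
        le_total := fun a b => by
          rcases Classical.em (a = b) with h | h
          · exact Or.inl (h ▸ S11.reach_refl A a)
          · rcases hlin a b h with ⟨h1, -⟩ | ⟨h1, -⟩
            exacts [Or.inl h1, Or.inr h1],
        toDecidableLE := fun _ _ => Classical.propDecidable _ }
    have hle : ∀ p s : σ, p ≤ s ↔ ReachableFrom A p s := fun _ _ => Iff.rfl
    let e := monoEquivOfFin σ hnn
    have happly : ∀ s : σ, e (e.symm s) = s := fun s => e.apply_symm_apply s
    have hstep_ne : ∀ (s : σ) (a : α), A.step s a = s → IsRejectingSink A s :=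
      fun s a h => hacyc s [a] (by simp) h
    have hstart : A.start = e ⟨0, by omega⟩ := by
      apply le_antisymm
      · exact (hle _ _).mpr (S11.all_reachable A hmin _)
      · rw [← happly A.start]
        exact e.monotone (by rw [Fin.le_def]; exact Nat.zero_le _)
    have htop : ∀ s : σ, s ≤ e ⟨n - 1, by omega⟩ := by
      intro s
      have h1 : e.symm s ≤ ⟨n - 1, by omega⟩ := by
        rw [Fin.le_def]
        simp only [S11.val_mk]
        have := (e.symm s).isLt
        omega
      have := e.monotone h1
      rwa [happly] at this
    have hsink_top : IsRejectingSink A (e ⟨n - 1, by omega⟩) := by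
      by_cases h : A.step (e ⟨n - 1, by omega⟩) a₀ = e ⟨n - 1, by omega⟩
      · exact hstep_ne _ a₀ h
      · exact absurd (le_antisymm (htop _) ((hle _ _).mpr (S11.reach_step A _ a₀))) h
    have hconsec : ∀ (k k' : Fin n), (k : ℕ) + 1 = (k' : ℕ) →
        ∀ s : σ, e k < s → s ≤ e k' → s = e k' := by
      intro k k' hkk s h1 h2
      have h1' : k < e.symm s := by
        rw [← e.lt_iff_lt, happly]; exact h1
      have h2' : e.symm s ≤ k' := by
        rw [← e.le_iff_le, happly]; exact h2
      have h3 : e.symm s = k' := by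
        rw [Fin.lt_def] at h1'; rw [Fin.le_def] at h2'
        apply Fin.ext; omega
      rw [← h3, happly]
    have hchain : ∀ k : ℕ, ∀ hk2 : k ≤ n - 2,
        ∃ w : List α, w.length = k ∧ A.evalFrom A.start w = e ⟨k, by omega⟩ := by
      intro k
      induction k with
      | zero => intro _; exact ⟨[], rfl, hstart⟩
      | succ k ih =>
          intro hk
          obtain ⟨w, hwl, hwe⟩ := ih (by omega)
          have hlt : (⟨k, by omega⟩ : Fin n) < ⟨k + 1, by omega⟩ := by
            rw [Fin.lt_def]; simp only [S11.val_mk]; omega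
          have hlt' : e ⟨k, by omega⟩ < e ⟨k + 1, by omega⟩ := e.strictMono hlt
          obtain ⟨u, hu⟩ := (hle _ _).mp hlt'.le
          have hune : u ≠ [] := by rintro rfl; exact hlt'.ne hu
          obtain ⟨a, u', rfl⟩ := List.exists_cons_of_ne_nil hune
          rw [S11.evalFrom_cons] at hu
          have hsns : ¬ IsRejectingSink A (e ⟨k, by omega⟩) := by
            intro hs
            have : A.evalFrom (e ⟨k, by omega⟩) u' = e ⟨k, by omega⟩ := S11.sink_eval A hs u'
            have hs2 : A.step (e ⟨k, by omega⟩) a = e ⟨k, by omega⟩ := hs.2 a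
            rw [hs2, this] at hu
            exact hlt'.ne hu
          have h1 : e ⟨k, by omega⟩ < A.step (e ⟨k, by omega⟩) a := by
            refine lt_of_le_of_ne ((hle _ _).mpr (S11.reach_step A _ a)) ?_
            intro heq
            exact hsns (hstep_ne _ a heq.symm)
          have h2 : A.step (e ⟨k, by omega⟩) a ≤ e ⟨k + 1, by omega⟩ :=
            (hle _ _).mpr ⟨u', hu⟩
          have h3 := hconsec ⟨k, by omega⟩ ⟨k + 1, by omega⟩ rfl _ h1 h2
          refine ⟨w ++ [a], by simp [hwl], ?_⟩
          rw [DFA.evalFrom_of_append, hwe]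
          exact h3
    obtain ⟨W, hWlen, hWeval⟩ := hchain (n - 2) le_rfl
    have hWtake : W.take (n - 2) = W := by rw [← hWlen]; exact List.take_length (l := W)
    -- the state e ⟨n-2⟩ is accepting
    have hqacc : e ⟨n - 2, by omega⟩ ∈ A.accept := by
      by_contra hq
      by_cases h2 : n = 2
      · obtain ⟨w0, hw0⟩ := hne
        have hst : A.evalFrom A.start w0 ∈ A.accept := (S11.mem_accepts' A w0).mp hw0
        have hs0 : A.evalFrom A.start w0 = e (e.symm (A.evalFrom A.start w0)) :=
          (happly _).symm
        have hv := (e.symm (A.evalFrom A.start w0)).isLt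
        rcases (by omega : (e.symm (A.evalFrom A.start w0) : ℕ) = 0 ∨
            (e.symm (A.evalFrom A.start w0) : ℕ) = 1) with h | h
        · apply hq
          rw [hs0] at hst
          have : e.symm (A.evalFrom A.start w0) = ⟨n - 2, by omega⟩ := by
            apply Fin.ext; simp only [S11.val_mk]; omega
          rwa [this] at hst
        · apply hsink_top.1
          rw [hs0] at hst
          have : e.symm (A.evalFrom A.start w0) = ⟨n - 1, by omega⟩ := by
            apply Fin.ext; simp only [S11.val_mk]; omega
          rwa [this] at hst
      · have h3 : 3 ≤ n := by omega
        have hzq : e ⟨n - 1, by omega⟩ ≠ e ⟨n - 2, by omega⟩ := by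
          intro h
          have := congrArg Fin.val (e.injective h)
          simp at this; omega
        have hsq : A.start ≠ e ⟨n - 2, by omega⟩ := by
          rw [hstart]
          intro h
          have := congrArg Fin.val (e.injective h)
          simp at this; omega
        have hdead : ∀ w : List α, A.evalFrom (e ⟨n - 2, by omega⟩) w ∉ A.accept := by
          intro w hw'
          have hqs : e ⟨n - 2, by omega⟩ ≤ A.evalFrom (e ⟨n - 2, by omega⟩) w :=
            (hle _ _).mpr ⟨w, rfl⟩
          have h4 : (⟨n - 2, by omega⟩ : Fin n) ≤ e.symm (A.evalFrom (e ⟨n - 2, by omega⟩) w) := by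
            rw [← e.le_iff_le, happly]; exact hqs
          rw [Fin.le_def] at h4
          simp only [S11.val_mk] at h4
          have h5 := (e.symm (A.evalFrom (e ⟨n - 2, by omega⟩) w)).isLt
          rcases (by omega : (e.symm (A.evalFrom (e ⟨n - 2, by omega⟩) w) : ℕ) = n - 2 ∨
              (e.symm (A.evalFrom (e ⟨n - 2, by omega⟩) w) : ℕ) = n - 1) with h6 | h6
          · apply hq
            have h7 : e.symm (A.evalFrom (e ⟨n - 2, by omega⟩) w) = ⟨n - 2, by omega⟩ :=
              Fin.ext h6
            rw [← happly (A.evalFrom (e ⟨n - 2, by omega⟩) w), h7] at hw'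
            exact hw'
          · apply hsink_top.1
            have h7 : e.symm (A.evalFrom (e ⟨n - 2, by omega⟩) w) = ⟨n - 1, by omega⟩ :=
              Fin.ext h6
            rw [← happly (A.evalFrom (e ⟨n - 2, by omega⟩) w), h7] at hw'
            exact hw'
        have hacceq := S11.prune_accepts_eq A (e ⟨n - 2, by omega⟩) (e ⟨n - 1, by omega⟩)
          hzq hsq hsink_top hdead
        have hcard : Fintype.card {s : σ // s ≠ e ⟨n - 2, by omega⟩} = n - 1 := by
          have := Fintype.card_subtype_compl (fun s : σ => s = e ⟨n - 2, by omega⟩)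
          simp only [Fintype.card_subtype_eq] at this
          rw [hnn] at this
          convert this using 2
        have hB : ∃ B : DFA α (Fin (n - 1)), B.accepts = A.accepts :=
          ⟨S11.mapDFA _ (Fintype.equivFinOfCardEq hcard), by rw [S11.mapDFA_accepts, hacceq]⟩
        have := hmin (n - 1) hB
        omega
    have hWacc : W ∈ A.accepts := by
      rw [S11.mem_accepts', hWeval]; exact hqacc
    -- no proper extension of W is accepted
    have hWext : ∀ v : List α, v ≠ [] → W ++ v ∉ A.accepts := by
      intro v hv hacc'
      obtain ⟨b, v', rfl⟩ := List.exists_cons_of_ne_nil hv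
      have hq1' : e ⟨n - 2, by omega⟩ < A.step (e ⟨n - 2, by omega⟩) b := by
        refine lt_of_le_of_ne ((hle _ _).mpr (S11.reach_step A _ b)) ?_
        intro heq
        exact (hstep_ne _ b heq.symm).1 hqacc
      have h4 : (⟨n - 2, by omega⟩ : Fin n) < e.symm (A.step (e ⟨n - 2, by omega⟩) b) := by
        rw [← e.lt_iff_lt, happly]; exact hq1'
      rw [Fin.lt_def] at h4
      simp only [S11.val_mk] at h4
      have h5 := (e.symm (A.step (e ⟨n - 2, by omega⟩) b)).isLt
      have h6 : e.symm (A.step (e ⟨n - 2, by omega⟩) b) = ⟨n - 1, by omega⟩ := by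
        apply Fin.ext; simp only [S11.val_mk]; omega
      have hstepz : A.step (e ⟨n - 2, by omega⟩) b = e ⟨n - 1, by omega⟩ := by
        rw [← happly (A.step (e ⟨n - 2, by omega⟩) b), h6]
      have : A.evalFrom A.start (W ++ b :: v') ∈ A.accept :=
        (S11.mem_accepts' A _).mp hacc'
      rw [DFA.evalFrom_of_append, hWeval, S11.evalFrom_cons, hstepz,
        S11.sink_eval A hsink_top v'] at this
      exact hsink_top.1 this
    -- length bound on accepted words
    obtain ⟨M, hM⟩ : ∃ M : ℕ, ∀ w ∈ A.accepts, w.length ≤ M := by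
      obtain ⟨M, hM⟩ := (hfin.image List.length).bddAbove
      exact ⟨M, fun w hw => hM (Set.mem_image_of_mem _ hw)⟩
    obtain ⟨i, hWi⟩ := (hiff W).mp hWacc
    have hszi := hsz i
    have hpendacc : (Bf i).evalFrom (Bf i).start W ∈ (Bf i).accept :=
      (S11.mem_accepts' _ _).mp hWi
    -- the run of W in Bf i is injective
    have hinj : ∀ j1 j2 : ℕ, j1 ≤ n - 2 → j2 ≤ n - 2 →
        (Bf i).evalFrom (Bf i).start (W.take j1) = (Bf i).evalFrom (Bf i).start (W.take j2) →
        j1 = j2 := by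
      intro j1 j2 hj1 hj2 hpe
      by_contra hne2
      wlog hlt12 : j1 < j2 generalizing j1 j2
      · exact this j2 j1 hj2 hj1 hpe.symm (Ne.symm hne2) (by omega)
      set y := (W.take j2).drop j1 with hy
      have htt : (W.take j2).take j1 = W.take j1 := by
        rw [List.take_take, min_eq_left hlt12.le]
      have hxy : W.take j1 ++ y = W.take j2 := by
        rw [← htt]; exact List.take_append_drop j1 (W.take j2)
      have hylen : y.length = j2 - j1 := by
        simp [hy, List.length_drop, List.length_take, hWlen]
        omega
      have hcyc : (Bf i).evalFrom ((Bf i).evalFrom (Bf i).start (W.take j1)) y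
          = (Bf i).evalFrom (Bf i).start (W.take j1) := by
        rw [← DFA.evalFrom_of_append, hxy, hpe]
      have hrep : (W.take j1 ++ (S11.rep (M + 1) y ++ W.drop j2)) ∈ (Bf i).accepts := by
        rw [S11.mem_accepts', DFA.evalFrom_of_append, DFA.evalFrom_of_append,
          S11.rep_eval (Bf i) hcyc (M + 1), hpe, ← DFA.evalFrom_of_append,
          List.take_append_drop]
        exact hpendacc
      have hmem : (W.take j1 ++ (S11.rep (M + 1) y ++ W.drop j2)) ∈ A.accepts :=
        (hiff _).mpr ⟨i, hrep⟩
      have hlen := hM _ hmem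
      have h6 : M + 1 ≤ (M + 1) * y.length :=
        Nat.le_mul_of_pos_right _ (by omega)
      have h7 : (S11.rep (M + 1) y).length = (M + 1) * y.length := S11.rep_length _ _
      have h8 : (S11.rep (M + 1) y).length ≤
          (W.take j1 ++ (S11.rep (M + 1) y ++ W.drop j2)).length := by
        simp [List.length_append]
        omega
      rw [h7] at h8
      omega
    have hinj' : Function.Injective
        (fun j : Fin (n - 1) => (Bf i).evalFrom (Bf i).start (W.take j.1)) := by
      intro j1 j2 h
      exact Fin.ext (hinj j1.1 j2.1 (by omega) (by omega) h)
    have hcard1 : n - 1 ≤ sz i := by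
      have := Fintype.card_le_of_injective _ hinj'
      simpa using this
    have hszeq : sz i = n - 1 := by omega
    have hsurj : Function.Surjective
        (fun j : Fin (n - 1) => (Bf i).evalFrom (Bf i).start (W.take j.1)) :=
      ((Fintype.bijective_iff_injective_and_card _).mpr ⟨hinj', by simp [hszeq]⟩).2
    obtain ⟨k, hk⟩ := hsurj ((Bf i).step ((Bf i).evalFrom (Bf i).start W) a₀)
    have hfinal : (W ++ (a₀ :: W.drop k.1)) ∈ (Bf i).accepts := by
      rw [S11.mem_accepts', DFA.evalFrom_of_append, S11.evalFrom_cons, ← hk]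
      show (Bf i).evalFrom ((Bf i).evalFrom (Bf i).start (W.take k.1)) (W.drop k.1) ∈ _
      rw [← DFA.evalFrom_of_append, List.take_append_drop]
      exact hpendacc
    exact hWext (a₀ :: W.drop k.1) (by simp) ((hiff _).mpr ⟨i, hfinal⟩)
end

section
/- Let w ∈ Σ* with |w| = n ≥ 1 containing at least two distinct letters, and let σ be a letter occurring in w. Then {w} = {w}* ∩ {u ∈ Σ* : |u|_σ = |w|_σ}, the minimal DFA for {w}* has n+1 states, and the minimal DFA for {u : |u|_σ = |w|_σ} has |w|_σ + 2 states; both sizes are strictly less than n+2. -/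
/-- The singleton language `{w}`. -/
def singletonLang {α : Type} (w : List α) : Language α := {u | u = w}

/-- The language of words with exactly `k` occurrences of the letter `σ`. -/
def countLang {α : Type} [DecidableEq α] (σ : α) (k : ℕ) : Language α :=
  {u | u.count σ = k}

section AuxStmt14

variable {α : Type}

lemma aux_dfa_lower {L : Language α} {m k : ℕ} (f : Fin m → List α)
    (hf : ∀ i j : Fin m, i < j → ∃ z, (f i ++ z) ∈ L ∧ (f j ++ z) ∉ L)
    (B : DFA α (Fin k)) (hB : B.accepts = L) : m ≤ k := by
  have key : ∀ i j : Fin m, B.eval (f i) = B.eval (f j) → ∀ z,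
      ((f i ++ z) ∈ L ↔ (f j ++ z) ∈ L) := by
    intro i j hij z
    rw [← hB, DFA.mem_accepts, DFA.mem_accepts]
    show B.evalFrom B.start (f i ++ z) ∈ B.accept ↔ B.evalFrom B.start (f j ++ z) ∈ B.accept
    rw [B.evalFrom_of_append, B.evalFrom_of_append]
    show B.evalFrom (B.eval (f i)) z ∈ B.accept ↔ B.evalFrom (B.eval (f j)) z ∈ B.accept
    rw [hij]
  have hinj : Function.Injective (fun i => B.eval (f i)) := by
    intro i j hij
    by_contra hne
    rcases Ne.lt_or_gt hne with h | h
    · obtain ⟨z, h1, h2⟩ := hf i j h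
      exact h2 ((key i j hij z).mp h1)
    · obtain ⟨z, h1, h2⟩ := hf j i h
      exact h2 ((key i j hij z).mpr h1)
  simpa using Fintype.card_le_of_injective _ hinj

lemma aux_ind_eq {L : Language α} {m : ℕ}
    (hub : ∃ B : DFA α (Fin m), B.accepts = L)
    (hlb : ∀ k, (∃ B : DFA α (Fin k), B.accepts = L) → m ≤ k) : Ind L = m := by
  have hne : m ∈ {n : ℕ | ∃ B : DFA α (Fin n), B.accepts = L} := hub
  exact le_antisymm (Nat.sInf_le hne) (hlb _ (Nat.sInf_mem ⟨m, hne⟩))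

lemma aux_mem_kstar_single {w u : List α} :
    u ∈ KStar.kstar (singletonLang w) ↔ ∃ m, u = (List.replicate m w).flatten := by
  constructor
  · intro h
    obtain ⟨Ls, hu, hLs⟩ := Language.mem_kstar.mp h
    refine ⟨Ls.length, ?_⟩
    rw [hu]; congr 1; exact List.eq_replicate_of_mem (fun b hb => hLs b hb)
  · rintro ⟨m, rfl⟩
    exact Language.join_mem_kstar (fun y hy => (List.eq_of_mem_replicate hy : y = w))

lemma aux_flatten_rep_length {w : List α} (m : ℕ) :
    ((List.replicate m w).flatten).length = m * w.length := by
  induction m with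
  | zero => simp
  | succ m ih => simp [List.replicate_succ, ih, Nat.succ_mul]; ring

lemma aux_flatten_rep_count [DecidableEq α] {w : List α} (σ : α) (m : ℕ) :
    ((List.replicate m w).flatten).count σ = m * w.count σ := by
  induction m with
  | zero => simp
  | succ m ih => simp [List.replicate_succ, ih, Nat.succ_mul]; ring

end AuxStmt14

section AuxStmt14B

variable {α : Type}

/-- DFA for `{w}*` with `n+1` states (state `n` is a dead state). -/
def kstarDFA [DecidableEq α] (w : List α) (n : ℕ) : DFA α (Fin (n + 1)) where
  step q a :=
    if h : q.val < n ∧ w[q.val]? = some a then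
      if h2 : q.val + 1 = n then ⟨0, Nat.succ_pos n⟩ else ⟨q.val + 1, by omega⟩
    else ⟨n, Nat.lt_succ_self n⟩
  start := ⟨0, Nat.succ_pos n⟩
  accept := {⟨0, Nat.succ_pos n⟩}

lemma kstarDFA_step_val [DecidableEq α] (w : List α) (n : ℕ) (q : Fin (n + 1)) (a : α) :
    ((kstarDFA w n).step q a).val =
      if q.val < n ∧ w[q.val]? = some a then (if q.val + 1 = n then 0 else q.val + 1)
      else n := by
  show (if h : q.val < n ∧ w[q.val]? = some a then
      if h2 : q.val + 1 = n then (⟨0, Nat.succ_pos n⟩ : Fin (n + 1)) else ⟨q.val + 1, by omega⟩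
    else ⟨n, Nat.lt_succ_self n⟩).val = _
  split_ifs <;> rfl

lemma kstarDFA_start_val [DecidableEq α] (w : List α) (n : ℕ) :
    ((kstarDFA w n).start).val = 0 := rfl

lemma kstarDFA_run [DecidableEq α] {w : List α} {n : ℕ} (hlen : w.length = n) (hn : 1 ≤ n) :
    ∀ u : List α, ((kstarDFA w n).eval u).val = n ∨
      ∃ m i, i < n ∧ u = (List.replicate m w).flatten ++ w.take i ∧
        ((kstarDFA w n).eval u).val = i := by
  intro u
  induction u using List.reverseRecOn with
  | nil => exact Or.inr ⟨0, 0, hn, by simp, rfl⟩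
  | append_singleton u a ih =>
    rw [DFA.eval_append_singleton, kstarDFA_step_val]
    rcases ih with hdead | ⟨m, i, hi, hu, hst⟩
    · rw [hdead, if_neg (by simp)]
      exact Or.inl rfl
    · rw [hst]
      by_cases ha : w[i]? = some a
      · rw [if_pos ⟨hi, ha⟩]
        have hiw : i < w.length := by omega
        have hgw : w[i] = a := by
          have := List.getElem?_eq_getElem hiw
          rw [ha] at this; exact (Option.some_injective _ this).symm
        have htk : w.take (i + 1) = w.take i ++ [a] := by
          rw [List.take_succ, List.getElem?_eq_getElem hiw, hgw]; rfl
        by_cases h2 : i + 1 = n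
        · rw [if_pos h2]
          right
          refine ⟨m + 1, 0, hn, ?_, rfl⟩
          have hw : w.take (i + 1) = w := by rw [h2, ← hlen, List.take_length]
          rw [hu, List.append_assoc, ← htk, hw]
          simp [List.replicate_succ' (n := m)]
        · rw [if_neg h2]
          right
          refine ⟨m, i + 1, by omega, ?_, rfl⟩
          rw [hu, List.append_assoc, ← htk]
      · rw [if_neg (by tauto)]
        exact Or.inl rfl

lemma kstarDFA_eval_w_val [DecidableEq α] {w : List α} {n : ℕ} (hlen : w.length = n)
    (hn : 1 ≤ n) : ((kstarDFA w n).eval w).val = 0 := by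
  subst hlen
  have key : ∀ i ≤ w.length,
      ((kstarDFA w w.length).eval (w.take i)).val = if i = w.length then 0 else i := by
    intro i hi
    induction i with
    | zero =>
      have h0 : ((kstarDFA w w.length).eval (w.take 0)).val = 0 := rfl
      rw [h0]; split <;> rfl
    | succ i ihi =>
      have hin : i < w.length := by omega
      have htk : w.take (i + 1) = w.take i ++ [w[i]] := by
        rw [List.take_succ, List.getElem?_eq_getElem hin]; rfl
      have hprev := ihi (by omega)
      rw [if_neg (by omega)] at hprev
      rw [htk, DFA.eval_append_singleton, kstarDFA_step_val, hprev,
        if_pos ⟨hin, List.getElem?_eq_getElem hin⟩]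
  have := key w.length le_rfl
  rwa [if_pos rfl, List.take_length] at this

lemma kstarDFA_eval_rep [DecidableEq α] {w : List α} {n : ℕ} (hlen : w.length = n)
    (hn : 1 ≤ n) (m : ℕ) :
    ((kstarDFA w n).eval ((List.replicate m w).flatten)).val = 0 := by
  induction m with
  | zero => rfl
  | succ m ihm =>
    rw [List.replicate_succ, List.flatten_cons]
    show ((kstarDFA w n).evalFrom (kstarDFA w n).start (w ++ _)).val = 0
    rw [DFA.evalFrom_of_append]
    have hw : (kstarDFA w n).evalFrom (kstarDFA w n).start w = (kstarDFA w n).start :=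
      Fin.ext (kstarDFA_eval_w_val hlen hn)
    rw [hw]
    exact ihm

lemma kstarDFA_accepts [DecidableEq α] {w : List α} {n : ℕ} (hlen : w.length = n) (hn : 1 ≤ n) :
    (kstarDFA w n).accepts = KStar.kstar (singletonLang w) := by
  ext u
  rw [DFA.mem_accepts]
  have hacc : ((kstarDFA w n).eval u ∈ (kstarDFA w n).accept) ↔
      ((kstarDFA w n).eval u).val = 0 := by
    constructor
    · intro h
      have h' : (kstarDFA w n).eval u = ⟨0, Nat.succ_pos n⟩ := h
      rw [h']
    · intro h
      exact Set.mem_singleton_iff.mpr (Fin.ext h)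
  rw [hacc, aux_mem_kstar_single]
  constructor
  · intro h
    rcases kstarDFA_run hlen hn u with hdead | ⟨m, i, hi, hu, hst⟩
    · omega
    · have hi0 : i = 0 := by omega
      subst hi0
      exact ⟨m, by simpa using hu⟩
  · rintro ⟨m, rfl⟩
    exact kstarDFA_eval_rep hlen hn m

/-- DFA counting occurrences of `σ` up to `c+1`, with `c+2` states. -/
def countDFA [DecidableEq α] (σ : α) (c : ℕ) : DFA α (Fin (c + 2)) where
  step q a := if a = σ then ⟨min (q.val + 1) (c + 1), by omega⟩ else q
  start := ⟨0, by omega⟩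
  accept := {⟨c, by omega⟩}

lemma countDFA_step_val [DecidableEq α] (σ : α) (c : ℕ) (q : Fin (c + 2)) (a : α) :
    ((countDFA σ c).step q a).val = if a = σ then min (q.val + 1) (c + 1) else q.val := by
  show (if a = σ then (⟨min (q.val + 1) (c + 1), by omega⟩ : Fin (c + 2)) else q).val = _
  split_ifs <;> rfl

lemma countDFA_run [DecidableEq α] (σ : α) (c : ℕ) :
    ∀ u : List α, ((countDFA σ c).eval u).val = min (u.count σ) (c + 1) := by
  intro u
  induction u using List.reverseRecOn with
  | nil => show (0 : ℕ) = _; simp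
  | append_singleton u a ih =>
    rw [DFA.eval_append_singleton, countDFA_step_val, ih]
    rcases eq_or_ne a σ with rfl | h
    · rw [if_pos rfl]
      simp [List.count_append]
    · rw [if_neg h]
      have hc : (u ++ [a]).count σ = u.count σ := by
        simp [List.count_append, List.count_cons, Ne.symm h, h]
      rw [hc]

lemma countDFA_accepts [DecidableEq α] (σ : α) (c : ℕ) :
    (countDFA σ c).accepts = countLang σ c := by
  ext u
  rw [DFA.mem_accepts]
  have hrun := countDFA_run σ c u
  constructor
  · intro h
    have h' : (countDFA σ c).eval u = ⟨c, by omega⟩ := h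
    have hv : ((countDFA σ c).eval u).val = c := by rw [h']
    show u.count σ = c
    omega
  · intro h
    have hc : u.count σ = c := h
    have : (countDFA σ c).eval u = ⟨c, by omega⟩ := by
      apply Fin.ext
      rw [hrun, hc]
      show min c (c + 1) = c
      omega
    exact Set.mem_singleton_iff.mpr this

end AuxStmt14B

section AuxStmt14C

variable {α : Type}

lemma aux_not_mem_kstar {w u : List α} {n : ℕ} (hlen : w.length = n)
    (h1 : n < u.length) (h2 : u.length < 2 * n) :
    u ∉ KStar.kstar (singletonLang w) := by
  intro h
  obtain ⟨m, rfl⟩ := aux_mem_kstar_single.mp h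
  rw [aux_flatten_rep_length, hlen] at h1 h2
  rcases Nat.lt_or_ge m 2 with hm | hm
  · interval_cases m <;> omega
  · have := Nat.mul_le_mul_right n hm; omega

end AuxStmt14C

theorem stmt14' {α : Type} [DecidableEq α] (w : List α) (n : ℕ)
    (hlen : w.length = n) (hn : 1 ≤ n)
    (htwo : ∃ a b : α, a ∈ w ∧ b ∈ w ∧ a ≠ b)
    (σ : α) (hσ : σ ∈ w) :
    (∀ u : List α, u ∈ singletonLang w ↔
      (u ∈ KStar.kstar (singletonLang w) ∧ u ∈ countLang σ (w.count σ))) ∧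
    Ind (KStar.kstar (singletonLang w)) = n + 1 ∧
    Ind (countLang σ (w.count σ)) = w.count σ + 2 ∧
    n + 1 < n + 2 ∧ w.count σ + 2 < n + 2 := by
  obtain ⟨a, b, ha, hb, hab⟩ := htwo
  have hn0 : 0 < n := hn
  have hc_pos : 0 < w.count σ := List.count_pos_iff.mpr hσ
  have hc_lt : w.count σ < n := by
    have hle : w.count σ ≤ w.length := List.count_le_length
    have hne : w.count σ ≠ w.length := by
      intro h
      rw [List.count_eq_length] at h
      exact hab ((h a ha).symm.trans (h b hb))
    omega
  refine ⟨?_, ?_, ?_, by omega, by omega⟩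
  · -- part 1
    intro u
    constructor
    · intro hu
      have hu' : u = w := hu
      subst hu'
      exact ⟨aux_mem_kstar_single.mpr ⟨1, by simp⟩, rfl⟩
    · rintro ⟨hk, hcnt⟩
      obtain ⟨m, rfl⟩ := aux_mem_kstar_single.mp hk
      have hcnt' : m * w.count σ = w.count σ := by
        rw [← aux_flatten_rep_count]; exact hcnt
      have hm : m = 1 := by
        have h1 : m * w.count σ = 1 * w.count σ := by rw [hcnt', one_mul]
        exact Nat.eq_of_mul_eq_mul_right hc_pos h1
      subst hm
      show _ = w
      simp
  · -- Ind of {w}*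
    apply aux_ind_eq
    · exact ⟨kstarDFA w n, kstarDFA_accepts hlen hn⟩
    · rintro k ⟨B, hB⟩
      -- pick a word d of length n with d ≠ w
      obtain ⟨d, hdlen, hdw⟩ : ∃ d : List α, d.length = n ∧ d ≠ w := by
        by_cases hwa : w = List.replicate n a
        · refine ⟨List.replicate n b, by simp, ?_⟩
          intro h
          rw [hwa] at h
          have : b ∈ List.replicate n a := by
            rw [← h]; exact List.mem_replicate.mpr ⟨by omega, rfl⟩
          exact hab (List.eq_of_mem_replicate this).symm
        · exact ⟨List.replicate n a, by simp, fun h => hwa h.symm⟩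
      refine aux_dfa_lower
        (fun i : Fin (n + 1) => if i.val = n then d else w.take i.val) ?_ B hB
      intro i j hij
      have hivn : i.val < n := by omega
      refine ⟨w.drop i.val, ?_, ?_⟩
      · simp only [if_neg (by omega : ¬ i.val = n)]
        rw [List.take_append_drop]
        exact aux_mem_kstar_single.mpr ⟨1, by simp⟩
      · by_cases hj : j.val = n
        · simp only [if_pos hj]
          by_cases hi0 : i.val = 0
          · rw [hi0, List.drop_zero]
            intro hmem
            obtain ⟨m, hm⟩ := aux_mem_kstar_single.mp hmem
            have hlm : 2 * n = m * n := by
              have := congrArg List.length hm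
              rw [aux_flatten_rep_length, hlen] at this
              simp only [List.length_append, hdlen, hlen] at this
              omega
            have hm2 : m = 2 := (Nat.eq_of_mul_eq_mul_right hn0 hlm.symm)
            subst hm2
            have hww : (List.replicate 2 w).flatten = w ++ w := by simp
            rw [hww] at hm
            exact hdw (List.append_inj hm (by rw [hdlen, hlen])).1
          · apply aux_not_mem_kstar hlen <;>
              simp only [List.length_append, hdlen, List.length_drop, hlen] <;> omega
        · simp only [if_neg hj]
          have hjvn : j.val < n := by omega
          apply aux_not_mem_kstar hlen <;>
            simp only [List.length_append, List.length_take, List.length_drop, hlen] <;> omega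
  · -- Ind of counting language
    apply aux_ind_eq
    · exact ⟨countDFA σ (w.count σ), countDFA_accepts σ (w.count σ)⟩
    · rintro k ⟨B, hB⟩
      refine aux_dfa_lower
        (fun i : Fin (w.count σ + 2) => List.replicate i.val σ) ?_ B hB
      intro i j hij
      refine ⟨List.replicate (w.count σ - i.val) σ, ?_, ?_⟩
      · show (List.replicate i.val σ ++ _).count σ = w.count σ
        rw [← List.replicate_add, List.count_replicate_self]
        omega
      · intro hmem
        have hcm : (List.replicate j.val σ ++
            List.replicate (w.count σ - i.val) σ).count σ = w.count σ := hmem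
        rw [← List.replicate_add, List.count_replicate_self] at hcm
        omega


/-- For a word `w` of length `n ≥ 1` containing at least two distinct
letters, and a letter `σ` occurring in `w`: `{w} = {w}* ∩ {u : |u|_σ = |w|_σ}`, the minimal
DFA for `{w}*` has `n + 1` states, the minimal DFA for the counting language has
`|w|_σ + 2` states, and both sizes are strictly less than `n + 2`. -/
theorem stmt14 {α : Type} [DecidableEq α] (w : List α) (n : ℕ)
    (hlen : w.length = n) (hn : 1 ≤ n)
    (htwo : ∃ a b : α, a ∈ w ∧ b ∈ w ∧ a ≠ b)
    (σ : α) (hσ : σ ∈ w) :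
    (∀ u : List α, u ∈ singletonLang w ↔
      (u ∈ KStar.kstar (singletonLang w) ∧ u ∈ countLang σ (w.count σ))) ∧
    Ind (KStar.kstar (singletonLang w)) = n + 1 ∧
    Ind (countLang σ (w.count σ)) = w.count σ + 2 ∧
    n + 1 < n + 2 ∧ w.count σ + 2 < n + 2 := by
  exact stmt14' w n hlen hn htwo σ hσ
end

section
/- There exists a finite language that is DNF-composite (decomposable as a union of intersections of languages of DFAs each strictly smaller than its index) but both intersection-prime and union-prime. In particular, the language L recognized by the 5-state minimal linear safety DFA over {a1,a2,a3} with transitions q0 →{a1,a2} q1, q0 →{a3} q2, q1 →{a2,a3} q2, q1 →{a1} sink, q2 →{a3} q3, q2 →{a1,a2} sink, q3 →Σ sink, with q0,q1,q2,q3 accepting, is such a language. -/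
/-- The 5-state minimal linear safety DFA over the alphabet `{a1, a2, a3} = Fin 3`
witnessing STATEMENT 15: transitions `q0 →{a1,a2} q1`, `q0 →{a3} q2`, `q1 →{a2,a3} q2`,
`q1 →{a1} sink`, `q2 →{a3} q3`, `q2 →{a1,a2} sink`, `q3 →Σ sink`, with `q0,q1,q2,q3`
accepting and state `4` the rejecting sink. -/
def exDFA : DFA (Fin 3) (Fin 5) where
  step := fun q a => ![![1, 1, 2], ![4, 2, 2], ![4, 4, 3], ![4, 4, 4], ![4, 4, 4]] q a
  start := 0
  accept := {0, 1, 2, 3}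

lemma mem_exDFA_iff (v : List (Fin 3)) : v ∈ exDFA.accepts ↔ exDFA.eval v ≠ 4 := by
  rw [DFA.mem_accepts]
  have : ∀ x : Fin 5, x ∈ exDFA.accept ↔ x ≠ 4 := by
    intro x
    simp only [exDFA, Set.mem_insert_iff, Set.mem_singleton_iff]
    fin_cases x <;> decide
  exact this _

section Keys
variable {m : ℕ} (B : DFA (Fin 3) (Fin m))

lemma mem_of_eval_eq {p q : List (Fin 3)} (h : B.eval p = B.eval q)
    (hq : q ∈ B.accepts) : p ∈ B.accepts := by
  rw [DFA.mem_accepts] at hq ⊢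
  rw [show B.eval p = B.eval q from h]
  exact hq

lemma eval_app (x y : List (Fin 3)) : B.eval (x ++ y) = B.evalFrom (B.eval x) y :=
  DFA.evalFrom_of_append _ _ _ _

lemma fin_univ4 (hm : m ≤ 4) (x0 x1 x2 x3 : Fin m)
    (h10 : x1 ≠ x0) (h20 : x2 ≠ x0) (h21 : x2 ≠ x1)
    (h30 : x3 ≠ x0) (h31 : x3 ≠ x1) (h32 : x3 ≠ x2) :
    ∀ y : Fin m, y = x0 ∨ y = x1 ∨ y = x2 ∨ y = x3 := by
  intro y
  by_contra hy
  push_neg at hy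
  obtain ⟨hy0, hy1, hy2, hy3⟩ := hy
  have hcard : ({y, x0, x1, x2, x3} : Finset (Fin m)).card = 5 := by
    rw [Finset.card_insert_of_notMem (by
        simp only [Finset.mem_insert, Finset.mem_singleton]; push_neg
        exact ⟨hy0, hy1, hy2, hy3⟩),
      Finset.card_insert_of_notMem (by
        simp only [Finset.mem_insert, Finset.mem_singleton]; push_neg
        exact ⟨Ne.symm h10, Ne.symm h20, Ne.symm h30⟩),
      Finset.card_insert_of_notMem (by
        simp only [Finset.mem_insert, Finset.mem_singleton]; push_neg
        exact ⟨Ne.symm h21, Ne.symm h31⟩),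
      Finset.card_insert_of_notMem (by
        simp only [Finset.mem_singleton]
        exact Ne.symm h32),
      Finset.card_singleton]
  have hle : ({y, x0, x1, x2, x3} : Finset (Fin m)).card ≤ Fintype.card (Fin m) :=
    Finset.card_le_univ _
  rw [Fintype.card_fin] at hle
  omega

lemma eval_congr_append (p q s : List (Fin 3)) (h : B.eval p = B.eval q) :
    B.eval (p ++ s) = B.eval (q ++ s) := by
  rw [eval_app B, eval_app B, h]

/-- Every DFA with at most 4 states whose language contains `L` accepts `[0,1,2,2]`. -/
lemma keyI (hm : m ≤ 4) (hL : ∀ w ∈ exDFA.accepts, w ∈ B.accepts) :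
    ([0,1,2,2] : List (Fin 3)) ∈ B.accepts := by
  have hw : ∀ w : List (Fin 3), exDFA.eval w ≠ 4 → w ∈ B.accepts := by
    intro w h; exact hL w ((mem_exDFA_iff w).mpr h)
  by_cases h30 : B.eval [0,1,2] = B.eval []
  · exact mem_of_eval_eq B (eval_congr_append B [0,1,2] [] [2] h30) (hw [2] (by decide))
  by_cases h31 : B.eval [0,1,2] = B.eval [0]
  · exact mem_of_eval_eq B (eval_congr_append B [0,1,2] [0] [2] h31) (hw [0,2] (by decide))
  by_cases h32 : B.eval [0,1,2] = B.eval [0,1]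
  · exact mem_of_eval_eq B (eval_congr_append B [0,1,2] [0,1] [2] h32) (hw [0,1,2] (by decide))
  by_cases h20 : B.eval [0,1] = B.eval []
  · exact mem_of_eval_eq B (eval_congr_append B [0,1] [] [2,2] h20) (hw [2,2] (by decide))
  by_cases h21 : B.eval [0,1] = B.eval [0]
  · exact mem_of_eval_eq B (eval_congr_append B [0,1] [0] [2,2] h21) (hw [0,2,2] (by decide))
  by_cases h10 : B.eval [0] = B.eval []
  · exact mem_of_eval_eq B (eval_congr_append B [0] [] [1,2,2] h10) (hw [1,2,2] (by decide))
  · have huniv := fin_univ4 hm (B.eval []) (B.eval [0]) (B.eval [0,1]) (B.eval [0,1,2])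
      h10 h20 h21 h30 h31 h32
    rcases huniv (B.eval [0,1,2,2]) with h | h | h | h
    · exact mem_of_eval_eq B h (hw [] (by decide))
    · exact mem_of_eval_eq B h (hw [0] (by decide))
    · exact mem_of_eval_eq B h (hw [0,1] (by decide))
    · exact mem_of_eval_eq B h (hw [0,1,2] (by decide))

/-- Every DFA with at most 4 states accepting `[0,1,2]` accepts some word of length ≥ 4. -/
lemma keyU (hm : m ≤ 4) (h012 : ([0,1,2] : List (Fin 3)) ∈ B.accepts) :
    ∃ u : List (Fin 3), u ∈ B.accepts ∧ 4 ≤ u.length := by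
  by_cases h10 : B.eval [0] = B.eval []
  · exact ⟨[0] ++ [0,1,2],
      mem_of_eval_eq B (eval_congr_append B [0] [] [0,1,2] h10) h012, by decide⟩
  by_cases h20 : B.eval [0,1] = B.eval []
  · exact ⟨[0,1] ++ [0,1,2],
      mem_of_eval_eq B (eval_congr_append B [0,1] [] [0,1,2] h20) h012, by decide⟩
  by_cases h21 : B.eval [0,1] = B.eval [0]
  · exact ⟨[0,1] ++ [1,2],
      mem_of_eval_eq B (eval_congr_append B [0,1] [0] [1,2] h21) h012, by decide⟩
  by_cases h30 : B.eval [0,1,2] = B.eval []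
  · exact ⟨[0,1,2] ++ [0,1,2],
      mem_of_eval_eq B (eval_congr_append B [0,1,2] [] [0,1,2] h30) h012, by decide⟩
  by_cases h31 : B.eval [0,1,2] = B.eval [0]
  · exact ⟨[0,1,2] ++ [1,2],
      mem_of_eval_eq B (eval_congr_append B [0,1,2] [0] [1,2] h31) h012, by decide⟩
  by_cases h32 : B.eval [0,1,2] = B.eval [0,1]
  · exact ⟨[0,1,2] ++ [2],
      mem_of_eval_eq B (eval_congr_append B [0,1,2] [0,1] [2] h32) h012, by decide⟩
  · have huniv := fin_univ4 hm (B.eval []) (B.eval [0]) (B.eval [0,1]) (B.eval [0,1,2])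
      h10 h20 h21 h30 h31 h32
    rcases huniv (B.eval [0,1,2,0]) with h | h | h | h
    · exact ⟨[0,1,2,0] ++ [0,1,2],
        mem_of_eval_eq B (eval_congr_append B [0,1,2,0] [] [0,1,2] h) h012, by decide⟩
    · exact ⟨[0,1,2,0] ++ [1,2],
        mem_of_eval_eq B (eval_congr_append B [0,1,2,0] [0] [1,2] h) h012, by decide⟩
    · exact ⟨[0,1,2,0] ++ [2],
        mem_of_eval_eq B (eval_congr_append B [0,1,2,0] [0,1] [2] h) h012, by decide⟩
    · exact ⟨[0,1,2,0], mem_of_eval_eq B h h012, by decide⟩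

end Keys

lemma lower_bound {n : ℕ} (B : DFA (Fin 3) (Fin n)) (hB : B.accepts = exDFA.accepts) :
    5 ≤ n := by
  have hk : ∀ w1 w2 x : List (Fin 3), B.eval w1 = B.eval w2 →
      ((w1 ++ x) ∈ exDFA.accepts ↔ (w2 ++ x) ∈ exDFA.accepts) := by
    intro w1 w2 x h
    rw [← hB, DFA.mem_accepts, DFA.mem_accepts, eval_app, eval_app, h]
  have hpair : ∀ w1 w2 x : List (Fin 3), (w1 ++ x) ∈ exDFA.accepts →
      (w2 ++ x) ∉ exDFA.accepts → B.eval w1 ≠ B.eval w2 := by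
    intro w1 w2 x h1 h2 heq
    exact h2 ((hk w1 w2 x heq).mp h1)
  have d01 : B.eval [] ≠ B.eval [0] :=
    hpair [] [0] [0] (by rw [mem_exDFA_iff]; decide) (by rw [mem_exDFA_iff]; decide)
  have d02 : B.eval [] ≠ B.eval [0,1] :=
    hpair [] [0,1] [0] (by rw [mem_exDFA_iff]; decide) (by rw [mem_exDFA_iff]; decide)
  have d03 : B.eval [] ≠ B.eval [2,2] :=
    hpair [] [2,2] [0] (by rw [mem_exDFA_iff]; decide) (by rw [mem_exDFA_iff]; decide)
  have d04 : B.eval [] ≠ B.eval [0,0] :=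
    hpair [] [0,0] [] (by rw [mem_exDFA_iff]; decide) (by rw [mem_exDFA_iff]; decide)
  have d12 : B.eval [0] ≠ B.eval [0,1] :=
    hpair [0] [0,1] [1] (by rw [mem_exDFA_iff]; decide) (by rw [mem_exDFA_iff]; decide)
  have d13 : B.eval [0] ≠ B.eval [2,2] :=
    hpair [0] [2,2] [1] (by rw [mem_exDFA_iff]; decide) (by rw [mem_exDFA_iff]; decide)
  have d14 : B.eval [0] ≠ B.eval [0,0] :=
    hpair [0] [0,0] [] (by rw [mem_exDFA_iff]; decide) (by rw [mem_exDFA_iff]; decide)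
  have d23 : B.eval [0,1] ≠ B.eval [2,2] :=
    hpair [0,1] [2,2] [2] (by rw [mem_exDFA_iff]; decide) (by rw [mem_exDFA_iff]; decide)
  have d24 : B.eval [0,1] ≠ B.eval [0,0] :=
    hpair [0,1] [0,0] [] (by rw [mem_exDFA_iff]; decide) (by rw [mem_exDFA_iff]; decide)
  have d34 : B.eval [2,2] ≠ B.eval [0,0] :=
    hpair [2,2] [0,0] [] (by rw [mem_exDFA_iff]; decide) (by rw [mem_exDFA_iff]; decide)
  let f : Fin 5 → Fin n := fun k => B.eval (![[], [0], [0,1], [2,2], [0,0]] k)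
  have hinj : Function.Injective f := by
    intro i j hij
    fin_cases i <;> fin_cases j <;>
      first
        | rfl
        | exact absurd hij d01 | exact absurd hij (Ne.symm d01)
        | exact absurd hij d02 | exact absurd hij (Ne.symm d02)
        | exact absurd hij d03 | exact absurd hij (Ne.symm d03)
        | exact absurd hij d04 | exact absurd hij (Ne.symm d04)
        | exact absurd hij d12 | exact absurd hij (Ne.symm d12)
        | exact absurd hij d13 | exact absurd hij (Ne.symm d13)
        | exact absurd hij d14 | exact absurd hij (Ne.symm d14)
        | exact absurd hij d23 | exact absurd hij (Ne.symm d23)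
        | exact absurd hij d24 | exact absurd hij (Ne.symm d24)
        | exact absurd hij d34 | exact absurd hij (Ne.symm d34)
  simpa using Fintype.card_le_of_injective f hinj

lemma ind_eq : Ind (exDFA.accepts) = 5 := by
  have h5 : 5 ∈ {n : ℕ | ∃ B : DFA (Fin 3) (Fin n), B.accepts = exDFA.accepts} :=
    ⟨exDFA, rfl⟩
  refine le_antisymm (Nat.sInf_le h5) (le_csInf ⟨5, h5⟩ ?_)
  rintro n ⟨B, hB⟩
  exact lower_bound B hB

/-! ### The small DFAs used in the DNF decomposition -/

def autE : DFA (Fin 3) (Fin 4) := ⟨fun _ _ => 1, 0, {0}⟩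
def autO : DFA (Fin 3) (Fin 4) := ⟨fun q _ => ![1, 2, 2, 3] q, 0, {1}⟩
def autD1 : DFA (Fin 3) (Fin 4) := ⟨fun q _ => ![1, 2, 3, 3] q, 0, {2}⟩
def autD2 : DFA (Fin 3) (Fin 4) :=
  ⟨fun q a => ![if a = 2 then 2 else 1, if a = 0 then 3 else 0,
                if a = 2 then 0 else 3, 3] q, 0, {0}⟩
def autC3 : DFA (Fin 3) (Fin 4) := ⟨fun q _ => ![1, 2, 0, 3] q, 0, {0}⟩
def autP (w : Fin 3 → Fin 3) : DFA (Fin 3) (Fin 4) :=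
  ⟨fun q a => ![if a = w 0 then 1 else 3, if a = w 1 then 2 else 3,
                if a = w 2 then 0 else 3, 3] q, 0, {0, 1, 2}⟩
def autK (l : Fin 3) : DFA (Fin 3) (Fin 4) :=
  ⟨fun q a => if a = l then ![1, 2, 3, 2] q else q, 0, {1}⟩

lemma mem_autE_iff (v : List (Fin 3)) : v ∈ autE.accepts ↔ autE.eval v = 0 := Iff.rfl
lemma mem_autO_iff (v : List (Fin 3)) : v ∈ autO.accepts ↔ autO.eval v = 1 := Iff.rfl
lemma mem_autD1_iff (v : List (Fin 3)) : v ∈ autD1.accepts ↔ autD1.eval v = 2 := Iff.rfl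
lemma mem_autD2_iff (v : List (Fin 3)) : v ∈ autD2.accepts ↔ autD2.eval v = 0 := Iff.rfl
lemma mem_autC3_iff (v : List (Fin 3)) : v ∈ autC3.accepts ↔ autC3.eval v = 0 := Iff.rfl
lemma mem_autK_iff (l : Fin 3) (v : List (Fin 3)) :
    v ∈ (autK l).accepts ↔ (autK l).eval v = 1 := Iff.rfl
lemma mem_autP_iff (w : Fin 3 → Fin 3) (v : List (Fin 3)) :
    v ∈ (autP w).accepts ↔ (autP w).eval v ≠ 3 := by
  rw [DFA.mem_accepts]
  have : ∀ x : Fin 4, x ∈ (autP w).accept ↔ x ≠ 3 := by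
    intro x
    simp only [autP, Set.mem_insert_iff, Set.mem_singleton_iff]
    fin_cases x <;> decide
  exact this _

/-! ### Spec lemmas -/

lemma autE_spec (v : List (Fin 3)) (h : v ∈ autE.accepts) : v = [] := by
  rcases v with _ | ⟨a, v⟩
  · rfl
  · exfalso
    rw [mem_autE_iff] at h
    have hs : ∀ u : List (Fin 3), autE.evalFrom 1 u = 1 := by
      intro u; induction u with
      | nil => rfl
      | cons b u ih => exact ih
    have : autE.eval (a :: v) = 1 := hs v
    rw [this] at h
    exact absurd h (by decide)

lemma autO_spec (v : List (Fin 3)) (h : v ∈ autO.accepts) : ∃ a, v = [a] := by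
  rw [mem_autO_iff] at h
  rcases v with _ | ⟨a, _ | ⟨b, v⟩⟩
  · exact absurd h (by decide)
  · exact ⟨a, rfl⟩
  · exfalso
    have hs : ∀ (u : List (Fin 3)), autO.evalFrom 2 u = 2 := by
      intro u; induction u with
      | nil => rfl
      | cons c u ih =>
        have : autO.step 2 c = 2 := rfl
        show autO.evalFrom (autO.step 2 c) u = 2
        rw [this]; exact ih
    have h1 : autO.eval (a :: b :: v) = autO.evalFrom 2 v := rfl
    rw [h1, hs] at h
    exact absurd h (by decide)

lemma autD1_spec (v : List (Fin 3)) (h : v ∈ autD1.accepts) : ∃ a b, v = [a, b] := by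
  rw [mem_autD1_iff] at h
  rcases v with _ | ⟨a, _ | ⟨b, _ | ⟨c, v⟩⟩⟩
  · exact absurd h (by decide)
  · exfalso; fin_cases a <;> exact absurd h (by decide)
  · exact ⟨a, b, rfl⟩
  · exfalso
    have hs : ∀ (u : List (Fin 3)), autD1.evalFrom 3 u = 3 := by
      intro u; induction u with
      | nil => rfl
      | cons d u ih =>
        show autD1.evalFrom (autD1.step 3 d) u = 3
        rw [show autD1.step 3 d = 3 from rfl]; exact ih
    have h1 : autD1.eval (a :: b :: c :: v) = autD1.evalFrom 3 v := rfl
    rw [h1, hs] at h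
    exact absurd h (by decide)

lemma autC3_step (i : Fin 3) (a : Fin 3) : autC3.step i.castSucc a = (i + 1).castSucc := by
  fin_cases i <;> rfl

open Fin.NatCast in
lemma autC3_evalFrom : ∀ (v : List (Fin 3)) (i : Fin 3),
    autC3.evalFrom i.castSucc v = ((i + (v.length : Fin 3))).castSucc := by
  intro v
  induction v with
  | nil => intro i; simp
  | cons a v ih =>
    intro i
    show autC3.evalFrom (autC3.step i.castSucc a) v = _
    rw [autC3_step, ih (i + 1)]
    congr 1
    have : ((a :: v).length : Fin 3) = (v.length : Fin 3) + 1 := by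
      rw [List.length_cons]; push_cast; ring
    rw [this]; abel

open Fin.NatCast in
lemma autC3_spec (v : List (Fin 3)) (h : v ∈ autC3.accepts) : 3 ∣ v.length := by
  rw [mem_autC3_iff] at h
  have h0 : autC3.eval v = ((0 + (v.length : Fin 3))).castSucc := autC3_evalFrom v 0
  rw [h0] at h
  have : ((v.length : Fin 3)) = 0 := by
    have := h
    rw [zero_add] at this
    exact Fin.castSucc_injective _ this
  have hv : v.length % 3 = 0 := by
    have h1 : ((v.length : Fin 3) : ℕ) = v.length % 3 := Fin.val_natCast _ _
    rw [this] at h1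
    simpa using h1.symm
  exact Nat.dvd_of_mod_eq_zero hv

def patList (w : Fin 3 → Fin 3) : ℕ → Fin 3 → List (Fin 3)
  | 0, _ => []
  | n + 1, i => w i :: patList w n (i + 1)

lemma autP_sink (w : Fin 3 → Fin 3) (v : List (Fin 3)) : (autP w).evalFrom 3 v = 3 := by
  induction v with
  | nil => rfl
  | cons a v ih =>
    show (autP w).evalFrom ((autP w).step 3 a) v = 3
    rw [show (autP w).step 3 a = 3 from rfl]
    exact ih

lemma autP_step (w : Fin 3 → Fin 3) (i : Fin 3) (a : Fin 3) :
    (autP w).step i.castSucc a = if a = w i then (i + 1).castSucc else 3 := by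
  fin_cases i <;> rfl

lemma autP_spec (w : Fin 3 → Fin 3) : ∀ (v : List (Fin 3)) (i : Fin 3),
    (autP w).evalFrom i.castSucc v ≠ 3 → v = patList w v.length i := by
  intro v
  induction v with
  | nil => intro i _; rfl
  | cons a v ih =>
    intro i h
    rw [show (autP w).evalFrom i.castSucc (a :: v)
        = (autP w).evalFrom ((autP w).step i.castSucc a) v from rfl, autP_step] at h
    by_cases ha : a = w i
    · rw [if_pos ha] at h
      have hv := ih (i + 1) h
      show a :: v = w i :: patList w v.length (i + 1)
      rw [ha, ← hv]
    · rw [if_neg ha] at h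
      exact absurd (autP_sink w v) h

def gK : Fin 4 → Fin 4 := ![1, 2, 3, 2]

lemma autK_evalFrom (l : Fin 3) : ∀ (v : List (Fin 3)) (q : Fin 4),
    (autK l).evalFrom q v = gK^[v.count l] q := by
  intro v
  induction v with
  | nil => intro q; rfl
  | cons a v ih =>
    intro q
    show (autK l).evalFrom ((autK l).step q a) v = _
    by_cases ha : a = l
    · rw [show (autK l).step q a = gK q from by simp [autK, ha, gK], ih]
      rw [List.count_cons]
      simp only [ha, beq_self_eq_true, if_true]
      exact (Function.iterate_succ_apply gK _ q).symm
    · rw [show (autK l).step q a = q from by simp [autK, ha], ih]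
      rw [List.count_cons]
      simp [ha]

lemma gK_two : ∀ n : ℕ, gK^[n + 2] 0 = 2 ∨ gK^[n + 2] 0 = 3 := by
  intro n
  induction n with
  | zero => left; decide
  | succ k ih =>
    rw [show k + 1 + 2 = (k + 2) + 1 from by omega, Function.iterate_succ_apply']
    rcases ih with h | h <;> rw [h]
    · right; decide
    · left; decide

lemma autK_spec (l : Fin 3) (v : List (Fin 3)) (h : v ∈ (autK l).accepts) :
    v.count l = 1 := by
  rw [mem_autK_iff] at h
  have he : (autK l).eval v = gK^[v.count l] 0 := autK_evalFrom l v 0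
  rw [he] at h
  rcases hn : v.count l with _ | _ | n
  · rw [hn] at h; exact absurd h (by decide)
  · rfl
  · rw [hn] at h
    rcases gK_two n with h2 | h2 <;> rw [h2] at h <;> exact absurd h (by decide)

lemma patList_period (w : Fin 3 → Fin 3) (k : ℕ) (i : Fin 3) :
    patList w (k + 3) i = [w i, w (i + 1), w (i + 1 + 1)] ++ patList w k i := by
  have h1 : patList w (k + 3) i
      = w i :: w (i + 1) :: w (i + 1 + 1) :: patList w k (i + 1 + 1 + 1) := rfl
  have h2 : ∀ j : Fin 3, j + 1 + 1 + 1 = j := by decide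
  rw [h1, h2 i]
  rfl

/-- The key backward lemma for the length-3 disjuncts. -/
lemma disj_backward (w : Fin 3 → Fin 3) (l : Fin 3) (v : List (Fin 3))
    (hc : 1 ≤ ([w 0, w (0 + 1), w (0 + 1 + 1)] : List (Fin 3)).count l)
    (hw3 : patList w 3 0 ∈ exDFA.accepts)
    (hC : v ∈ autC3.accepts) (hP : v ∈ (autP w).accepts) (hK : v ∈ (autK l).accepts) :
    v ∈ exDFA.accepts := by
  have hlen := autC3_spec v hC
  have hcnt := autK_spec l v hK
  rw [mem_autP_iff] at hP
  have hpat : v = patList w v.length 0 :=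
    autP_spec w v 0 (by exact hP)
  obtain ⟨q, hq⟩ := hlen
  rcases q with _ | _ | q
  · -- length 0
    exfalso
    rw [hpat, hq] at hcnt
    simp [patList] at hcnt
  · -- length 3
    rw [hpat, hq]
    exact hw3
  · -- length ≥ 6
    exfalso
    have h6 : v.length = (3 * q + 3) + 3 := by omega
    rw [hpat, h6, patList_period, patList_period] at hcnt
    rw [List.count_append, List.count_append] at hcnt
    omega

lemma exDFA_sink (v : List (Fin 3)) : exDFA.evalFrom 4 v = 4 := by
  induction v with
  | nil => rfl
  | cons a v ih =>
    have h : exDFA.step 4 a = 4 := by fin_cases a <;> rfl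
    show exDFA.evalFrom (exDFA.step 4 a) v = 4
    rw [h]; exact ih

lemma exDFA_four : ∀ a b c d : Fin 3, exDFA.eval [a,b,c,d] = 4 := by decide

lemma exDFA_len_le {v : List (Fin 3)} (h : v ∈ exDFA.accepts) : v.length ≤ 3 := by
  by_contra hl
  push_neg at hl
  rcases v with _ | ⟨a, _ | ⟨b, _ | ⟨c, _ | ⟨d, t⟩⟩⟩⟩ <;> simp at hl
  rw [mem_exDFA_iff] at h
  apply h
  have h1 : (a :: b :: c :: d :: t) = [a,b,c,d] ++ t := rfl
  rw [h1]
  show exDFA.evalFrom exDFA.start ([a,b,c,d] ++ t) = 4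
  rw [DFA.evalFrom_of_append]
  have h4 : exDFA.evalFrom exDFA.start [a,b,c,d] = 4 := exDFA_four a b c d
  rw [h4]
  exact exDFA_sink t

def dnfB : Fin 7 → Fin 3 → DFA (Fin 3) (Fin 4) :=
  ![![autE, autE, autE], ![autO, autO, autO], ![autD1, autD2, autD2],
    ![autC3, autP ![0,1,2], autK 0], ![autC3, autP ![0,2,2], autK 0],
    ![autC3, autP ![1,1,2], autK 2], ![autC3, autP ![1,2,2], autK 1]]

lemma dnf_iff (v : List (Fin 3)) :
    v ∈ exDFA.accepts ↔ ∃ i : Fin 7, ∀ j : Fin 3, v ∈ (dnfB i j).accepts := by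
  constructor
  · intro hv
    have hlen := exDFA_len_le hv
    rcases v with _ | ⟨a, _ | ⟨b, _ | ⟨c, _ | ⟨d, t⟩⟩⟩⟩
    · exact ⟨0, by intro j; fin_cases j <;> exact (mem_autE_iff _).mpr (by decide)⟩
    · fin_cases a <;>
        exact ⟨1, by intro j; fin_cases j <;> exact (mem_autO_iff _).mpr (by decide)⟩
    · fin_cases a <;> fin_cases b <;>
        first
          | exact absurd hv (by rw [mem_exDFA_iff]; decide)
          | (refine ⟨2, fun j => ?_⟩; fin_cases j <;>
              first
                | exact (mem_autD1_iff _).mpr (by decide)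
                | exact (mem_autD2_iff _).mpr (by decide))
    · fin_cases a <;> fin_cases b <;> fin_cases c <;>
        first
          | exact absurd hv (by rw [mem_exDFA_iff]; decide)
          | (refine ⟨3, fun j => ?_⟩; fin_cases j <;>
              first
                | exact (mem_autC3_iff _).mpr (by decide)
                | exact (mem_autP_iff ![0,1,2] _).mpr (by decide)
                | exact (mem_autK_iff 0 _).mpr (by decide))
          | (refine ⟨4, fun j => ?_⟩; fin_cases j <;>
              first
                | exact (mem_autC3_iff _).mpr (by decide)
                | exact (mem_autP_iff ![0,2,2] _).mpr (by decide)
                | exact (mem_autK_iff 0 _).mpr (by decide))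
          | (refine ⟨5, fun j => ?_⟩; fin_cases j <;>
              first
                | exact (mem_autC3_iff _).mpr (by decide)
                | exact (mem_autP_iff ![1,1,2] _).mpr (by decide)
                | exact (mem_autK_iff 2 _).mpr (by decide))
          | (refine ⟨6, fun j => ?_⟩; fin_cases j <;>
              first
                | exact (mem_autC3_iff _).mpr (by decide)
                | exact (mem_autP_iff ![1,2,2] _).mpr (by decide)
                | exact (mem_autK_iff 1 _).mpr (by decide))
    · exfalso; simp at hlen; omega
  · rintro ⟨i, hj⟩
    fin_cases i
    · obtain rfl := autE_spec v (hj 0)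
      exact (mem_exDFA_iff _).mpr (by decide)
    · obtain ⟨a, rfl⟩ := autO_spec v (hj 0)
      fin_cases a <;> exact (mem_exDFA_iff _).mpr (by decide)
    · obtain ⟨a, b, rfl⟩ := autD1_spec v (hj 0)
      have h2 := (mem_autD2_iff _).mp (hj 1)
      revert h2
      fin_cases a <;> fin_cases b <;> intro h2 <;>
        first
          | exact (mem_exDFA_iff _).mpr (by decide)
          | exact absurd h2 (by decide)
    · exact disj_backward ![0,1,2] 0 v (by decide)
        ((mem_exDFA_iff _).mpr (by decide)) (hj 0) (hj 1) (hj 2)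
    · exact disj_backward ![0,2,2] 0 v (by decide)
        ((mem_exDFA_iff _).mpr (by decide)) (hj 0) (hj 1) (hj 2)
    · exact disj_backward ![1,1,2] 2 v (by decide)
        ((mem_exDFA_iff _).mpr (by decide)) (hj 0) (hj 1) (hj 2)
    · exact disj_backward ![1,2,2] 1 v (by decide)
        ((mem_exDFA_iff _).mpr (by decide)) (hj 0) (hj 1) (hj 2)

/-- There exists a finite language that is DNF-composite but both
intersection-prime and union-prime; in particular the language of `exDFA` is such. -/
theorem stmt15 :
    ∃ L : Language (Fin 3),
      {w : List (Fin 3) | w ∈ L}.Finite ∧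
      DNFDecomp L (Ind L) ∧
      ¬ InterDecomp L (Ind L - 1) ∧
      ¬ UnionDecomp L (Ind L) ∧
      L = exDFA.accepts := by
  refine ⟨exDFA.accepts, ?_, ?_, ?_, ?_, rfl⟩
  · exact Set.Finite.subset (List.finite_length_le (Fin 3) 3) (fun w hw => exDFA_len_le hw)
  · rw [ind_eq]
    exact ⟨6, fun _ => 2, fun _ _ => 4, dnfB, fun i j => by exact Nat.lt_succ_self 4, dnf_iff⟩
  · rw [ind_eq]
    rintro ⟨t, sz, B, hsz, hiff⟩
    have hall : ∀ i, ([0,1,2,2] : List (Fin 3)) ∈ (B i).accepts := fun i =>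
      keyI (B i) (by have := hsz i; omega) (fun w hw => (hiff w).mp hw i)
    have hmem : ([0,1,2,2] : List (Fin 3)) ∈ exDFA.accepts := (hiff _).mpr hall
    rw [mem_exDFA_iff] at hmem
    exact hmem (by decide)
  · rw [ind_eq]
    rintro ⟨t, sz, B, hsz, hiff⟩
    have h012 : ([0,1,2] : List (Fin 3)) ∈ exDFA.accepts := (mem_exDFA_iff _).mpr (by decide)
    obtain ⟨i, hi⟩ := (hiff _).mp h012
    obtain ⟨u, hu, hlen⟩ := keyU (B i) (by have := hsz i; omega) hi
    have := exDFA_len_le ((hiff u).mpr ⟨i, hu⟩)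
    omega
end

section
/- Every non-minimal DFA is S-composite, and a minimal DFA is S-prime if and only if it is prime. Consequently, a simple co-safety DFA (a co-safety DFA consisting of an accepting sink plus one strongly connected component containing all other states) is S-prime if and only if it is minimal. -/
/-- A DFA is S-composite: its language is an intersection of languages of DFAs each with
at most `k` states for some `k` strictly smaller than its own number of states. -/
def SComposite {α σ : Type} [Fintype σ] (A : DFA α σ) : Prop :=
  ∃ k : ℕ, k < Fintype.card σ ∧ InterDecomp A.accepts k

/-- A simple co-safety DFA: a co-safety DFA consisting of an accepting sink together with
one strongly connected component containing all other states. -/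
def SimpleCoSafety {α σ : Type} (A : DFA α σ) : Prop :=
  IsSafety {w : List α | w ∉ A.accepts} ∧
  ∃ qp : σ, A.accept = {qp} ∧ (∀ a, A.step qp a = qp) ∧
    ∀ q q' : σ, q ≠ qp → q' ≠ qp → ReachableFrom A q q'



open Classical
/-- transport a DFA along an equivalence of state types -/
def DFAReindex {α σ τ : Type} (e : σ ≃ τ) (A : DFA α σ) : DFA α τ where
  step t a := e (A.step (e.symm t) a)
  start := e A.start
  accept := {t | e.symm t ∈ A.accept}

theorem DFAReindex_evalFrom {α σ τ : Type} (e : σ ≃ τ) (A : DFA α σ) (q : σ) (w : List α) :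
    (DFAReindex e A).evalFrom (e q) w = e (A.evalFrom q w) := by
  induction w generalizing q with
  | nil => simp [DFA.evalFrom_nil]
  | cons a w ih =>
    have h1 : (DFAReindex e A).evalFrom (e q) (a :: w)
        = (DFAReindex e A).evalFrom ((DFAReindex e A).step (e q) a) w := rfl
    have h2 : A.evalFrom q (a :: w) = A.evalFrom (A.step q a) w := rfl
    rw [h1, h2]
    have : (DFAReindex e A).step (e q) a = e (A.step q a) := by simp [DFAReindex]
    rw [this, ih]

theorem DFAReindex_accepts {α σ τ : Type} (e : σ ≃ τ) (A : DFA α σ) :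
    (DFAReindex e A).accepts = A.accepts := by
  ext w
  have : (DFAReindex e A).eval w = e (A.eval w) := DFAReindex_evalFrom e A A.start w
  rw [DFA.mem_accepts, DFA.mem_accepts]
  show e.symm ((DFAReindex e A).eval w) ∈ A.accept ↔ _
  rw [this, Equiv.symm_apply_apply]

/-- every DFA on a fintype has a version over `Fin (card σ)` -/
theorem exists_fin_dfa {α σ : Type} [Fintype σ] (A : DFA α σ) :
    ∃ B : DFA α (Fin (Fintype.card σ)), B.accepts = A.accepts :=
  ⟨DFAReindex (Fintype.equivFin σ) A, DFAReindex_accepts _ _⟩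


open Classical
attribute [local instance] Classical.propDecidable

/-- if two states of A are equivalent, there is a smaller DFA for the same language -/
theorem exists_smaller_of_equiv_states {α σ : Type} [Fintype σ] (A : DFA α σ)
    (q₀ q₁ : σ) (hne : q₀ ≠ q₁)
    (heq : ∀ z : List α, A.evalFrom q₀ z ∈ A.accept ↔ A.evalFrom q₁ z ∈ A.accept) :
    ∃ m : ℕ, m < Fintype.card σ ∧ ∃ B : DFA α (Fin m), B.accepts = A.accepts := by
  classical
  let s : Setoid σ := ⟨fun p p' => ∀ z : List α, A.evalFrom p z ∈ A.accept ↔ A.evalFrom p' z ∈ A.accept,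
    ⟨fun _ _ => Iff.rfl, fun h z => (h z).symm, fun h h' z => (h z).trans (h' z)⟩⟩
  have stepwd : ∀ (a : α) (p p' : σ), s.r p p' →
      (Quotient.mk s (A.step p a) : Quotient s) = Quotient.mk s (A.step p' a) := by
    intro a p p' h
    refine Quotient.sound (fun z => ?_)
    have h1 : A.evalFrom (A.step p a) z = A.evalFrom p (a :: z) := rfl
    have h2 : A.evalFrom (A.step p' a) z = A.evalFrom p' (a :: z) := rfl
    rw [h1, h2]; exact h (a :: z)
  let Q : DFA α (Quotient s) :=
    { step := fun x a => Quotient.lift (fun p => Quotient.mk s (A.step p a)) (stepwd a) x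
      start := Quotient.mk s A.start
      accept := {x | Quotient.lift (fun p => p ∈ A.accept) (by
        intro p p' h
        simpa using propext (h [])) x} }
  have keval : ∀ (p : σ) (w : List α), Q.evalFrom (Quotient.mk s p) w = Quotient.mk s (A.evalFrom p w) := by
    intro p w
    induction w generalizing p with
    | nil => rfl
    | cons a w ih =>
      have h1 : Q.evalFrom (Quotient.mk s p) (a :: w) = Q.evalFrom (Q.step (Quotient.mk s p) a) w := rfl
      rw [h1]
      have h2 : Q.step (Quotient.mk s p) a = Quotient.mk s (A.step p a) := rfl
      rw [h2, ih]
      rfl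
  have hQacc : Q.accepts = A.accepts := by
    ext w
    rw [DFA.mem_accepts, DFA.mem_accepts]
    show Q.evalFrom (Quotient.mk s A.start) w ∈ Q.accept ↔ _
    rw [keval]
    exact Iff.rfl
  have hsurj : Function.Surjective (Quotient.mk s) := Quotient.mk_surjective
  have hninj : ¬ Function.Injective (Quotient.mk s) := by
    intro h
    exact hne (h (Quotient.sound heq))
  have hcard : Fintype.card (Quotient s) < Fintype.card σ :=
    Fintype.card_lt_of_surjective_not_injective _ hsurj hninj
  refine ⟨Fintype.card (Quotient s), hcard, ?_⟩
  obtain ⟨B, hB⟩ := exists_fin_dfa Q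
  exact ⟨B, hB.trans hQacc⟩

/-- minimal DFAs have pairwise distinguishable states -/
theorem minimal_distinguishable {α σ : Type} [Fintype σ] (A : DFA α σ)
    (hmin : DFAMinimal A) (q₀ q₁ : σ) (hne : q₀ ≠ q₁) :
    ∃ z : List α, ¬ (A.evalFrom q₀ z ∈ A.accept ↔ A.evalFrom q₁ z ∈ A.accept) := by
  by_contra h
  push_neg at h
  obtain ⟨m, hm, B, hB⟩ := exists_smaller_of_equiv_states A q₀ q₁ hne h
  exact absurd (hmin m ⟨B, hB⟩) (Nat.not_le.mpr hm)

theorem interdecomp_mono {α : Type} {L : Language α} {k k' : ℕ} (h : k ≤ k')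
    (hd : InterDecomp L k) : InterDecomp L k' := by
  obtain ⟨t, sz, B, hsz, hw⟩ := hd
  exact ⟨t, sz, B, fun i => le_trans (hsz i) h, hw⟩

theorem not_minimal_scomposite {α σ : Type} [Fintype σ] (A : DFA α σ)
    (h : ¬ DFAMinimal A) : SComposite A := by
  simp only [DFAMinimal, not_forall] at h
  obtain ⟨n, ⟨B, hB⟩, hlt⟩ := h
  push_neg at hlt
  refine ⟨n, hlt, 0, fun _ => n, fun _ => B, fun _ => le_refl n, fun w => ?_⟩
  constructor
  · intro hw _; rw [hB]; exact hw
  · intro hw; rw [← hB]; exact hw 0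

theorem ind_eq_card {α σ : Type} [Fintype σ] (A : DFA α σ) (hmin : DFAMinimal A) :
    Ind A.accepts = Fintype.card σ := by
  have hne : {n : ℕ | ∃ B : DFA α (Fin n), B.accepts = A.accepts}.Nonempty :=
    ⟨Fintype.card σ, exists_fin_dfa A⟩
  have h1 : Ind A.accepts ≤ Fintype.card σ := Nat.sInf_le (exists_fin_dfa A)
  have h2 : Fintype.card σ ≤ Ind A.accepts := hmin _ (Nat.sInf_mem hne)
  omega

theorem minimal_scomposite_iff {α σ : Type} [Fintype σ] (A : DFA α σ)
    (hmin : DFAMinimal A) : SComposite A ↔ DFAComposite A := by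
  have hind := ind_eq_card A hmin
  have hpos : 0 < Fintype.card σ := @Fintype.card_pos σ _ ⟨A.start⟩
  constructor
  · rintro ⟨k, hk, hd⟩
    exact interdecomp_mono (by omega : k ≤ Ind A.accepts - 1) hd
  · intro hd
    exact ⟨Ind A.accepts - 1, by omega, hd⟩

theorem eval_append' {α σ : Type} (M : DFA α σ) (u v : List α) :
    M.eval (u ++ v) = M.evalFrom (M.eval u) v :=
  M.evalFrom_of_append _ _ _

theorem fooling {α σ : Type} [Fintype σ] (A : DFA α σ) (hmin : DFAMinimal A)
    (qp : σ) (hacc : A.accept = {qp})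
    (hscc : ∀ q q' : σ, q ≠ qp → q' ≠ qp → ReachableFrom A q q')
    (hreach : ∀ q : σ, q ≠ qp → ∃ x, A.evalFrom q x = qp)
    {m : ℕ} (hm : m < Fintype.card σ) (Bi : DFA α (Fin m))
    (hL : ∀ w, w ∈ A.accepts → ∀ v, (w ++ v) ∈ Bi.accepts)
    (u : List α) (hq : A.eval u ≠ qp) :
    ∃ v, A.eval (u ++ v) ≠ qp ∧ ∀ v', ((u ++ v) ++ v') ∈ Bi.accepts := by
  classical
  have hx : ∀ p : σ, ∃ xp, A.evalFrom (A.eval u) xp = p := by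
    intro p
    by_cases hp : p = qp
    · subst hp; exact hreach _ hq
    · exact hscc _ p hq hp
  choose x hxx using hx
  have hninj : ¬ Function.Injective (fun p => Bi.evalFrom (Bi.eval u) (x p)) := by
    intro hinj
    have := Fintype.card_le_of_injective _ hinj
    rw [Fintype.card_fin] at this
    omega
  rw [Function.not_injective_iff] at hninj
  obtain ⟨p, p', hfp, hne⟩ := hninj
  obtain ⟨z, hz⟩ := minimal_distinguishable A hmin p p' hne
  rw [hacc, Set.mem_singleton_iff, Set.mem_singleton_iff] at hz
  have key : ∀ a b : σ, Bi.evalFrom (Bi.eval u) (x a) = Bi.evalFrom (Bi.eval u) (x b) →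
      A.evalFrom a z = qp → A.evalFrom b z ≠ qp →
      ∃ v, A.eval (u ++ v) ≠ qp ∧ ∀ v', ((u ++ v) ++ v') ∈ Bi.accepts := by
    intro a b hab ha hb
    refine ⟨x b ++ z, ?_, ?_⟩
    · rw [eval_append', A.evalFrom_of_append, hxx b]; exact hb
    · intro v'
      have hin : (u ++ (x a ++ z)) ∈ A.accepts := by
        rw [DFA.mem_accepts, eval_append', A.evalFrom_of_append, hxx a, ha, hacc]
        exact Set.mem_singleton qp
      have hthis := hL _ hin v'
      have e1 : ∀ c : List α, Bi.eval ((u ++ (c ++ z)) ++ v')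
          = Bi.evalFrom (Bi.evalFrom (Bi.eval u) c) (z ++ v') := by
        intro c
        rw [show (u ++ (c ++ z)) ++ v' = u ++ (c ++ (z ++ v')) by simp, eval_append',
          Bi.evalFrom_of_append]
      rw [DFA.mem_accepts] at hthis ⊢
      rw [e1]
      rw [e1] at hthis
      rw [← hab]
      exact hthis
  by_cases hcase : A.evalFrom p z = qp
  · have hb : A.evalFrom p' z ≠ qp := by intro h; exact hz ⟨fun _ => h, fun _ => hcase⟩
    exact key p p' hfp hcase hb
  · have ha : A.evalFrom p' z = qp := by
      by_contra h
      exact hz ⟨fun h1 => absurd h1 hcase, fun h2 => absurd h2 h⟩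
    exact key p' p hfp.symm ha hcase

theorem simple_cosafety_minimal_not_scomposite {α σ : Type} [Fintype σ] (A : DFA α σ)
    (hcs : SimpleCoSafety A) (hmin : DFAMinimal A) : ¬ SComposite A := by
  classical
  obtain ⟨hsafe, qp, hacc, hsink, hscc⟩ := hcs
  rintro ⟨k, hk, t, sz, B, hsz, hw⟩
  -- extension-closed
  have hext : ∀ w v : List α, w ∈ A.accepts → (w ++ v) ∈ A.accepts := by
    intro w v hwacc
    by_contra h
    exact (hsafe w v (fun hc => hc hwacc)) h
  -- sink stays
  have hsinkeval : ∀ w : List α, A.evalFrom qp w = qp := by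
    intro w
    induction w with
    | nil => rfl
    | cons a w ih =>
      have : A.evalFrom qp (a :: w) = A.evalFrom (A.step qp a) w := rfl
      rw [this, hsink a]; exact ih
  -- case: one state
  by_cases hn : Fintype.card σ ≤ 1
  · have hk0 : k = 0 := by omega
    have h0 : sz ⟨0, Nat.succ_pos t⟩ = 0 := by
      have := hsz ⟨0, Nat.succ_pos t⟩; omega
    exact Fin.elim0 (Fin.cast h0 ((B ⟨0, Nat.succ_pos t⟩).start))
  push_neg at hn
  -- start is not the sink
  have hstart : A.start ≠ qp := by
    intro h
    have hallw : ∀ w : List α, w ∈ A.accepts := by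
      intro w
      show A.evalFrom A.start w ∈ A.accept
      rw [h, hsinkeval w, hacc]
      exact Set.mem_singleton qp
    have : (⟨fun _ _ => 0, 0, Set.univ⟩ : DFA α (Fin 1)).accepts = A.accepts := by
      ext w
      exact ⟨fun _ => hallw w, fun _ => Set.mem_univ _⟩
    have := hmin 1 ⟨_, this⟩
    omega
  -- every non-sink state can reach the sink
  have hreach : ∀ q : σ, q ≠ qp → ∃ x, A.evalFrom q x = qp := by
    by_contra h
    push_neg at h
    obtain ⟨q, hqne, hqbad⟩ := h
    have hnoacc : ∀ w : List α, w ∉ A.accepts := by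
      intro w hwin
      rw [DFA.mem_accepts, hacc, Set.mem_singleton_iff] at hwin
      obtain ⟨x0, hx0⟩ := hscc q A.start hqne hstart
      exact hqbad (x0 ++ w) (by rw [A.evalFrom_of_append, hx0]; exact hwin)
    have : (⟨fun _ _ => 0, 0, ∅⟩ : DFA α (Fin 1)).accepts = A.accepts := by
      ext w
      exact ⟨fun hwin => (Set.notMem_empty _ hwin).elim, fun hwin => (hnoacc w hwin).elim⟩
    have := hmin 1 ⟨_, this⟩
    omega
  -- chaining
  have hchain : ∀ j : ℕ, j ≤ t + 1 → ∃ u : List α, A.eval u ≠ qp ∧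
      ∀ i : Fin (t + 1), (i : ℕ) < j → ∀ v, ((u ++ v) ∈ (B i).accepts) := by
    intro j
    induction j with
    | zero => exact fun _ => ⟨[], hstart, fun i hi => absurd hi (Nat.not_lt_zero _)⟩
    | succ j ih =>
      intro hj
      obtain ⟨u, hu, hP⟩ := ih (by omega)
      have hjlt : j < t + 1 := by omega
      have hLi : ∀ w, w ∈ A.accepts → ∀ v, (w ++ v) ∈ (B ⟨j, hjlt⟩).accepts := by
        intro w hwin v
        exact (hw (w ++ v)).mp (hext w v hwin) ⟨j, hjlt⟩
      obtain ⟨v, hv1, hv2⟩ := fooling A hmin qp hacc hscc hreach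
        (lt_of_le_of_lt (hsz ⟨j, hjlt⟩) hk) (B ⟨j, hjlt⟩) hLi u hu
      refine ⟨u ++ v, hv1, fun i hi v' => ?_⟩
      rcases Nat.lt_or_ge (i : ℕ) j with h | h
      · rw [List.append_assoc]
        exact hP i h (v ++ v')
      · have : i = (⟨j, hjlt⟩ : Fin (t + 1)) := by
          apply Fin.ext
          simp only []
          omega
        rw [this]
        exact hv2 v'
  obtain ⟨u, hu, hP⟩ := hchain (t + 1) (le_refl _)
  have : u ∈ A.accepts := by
    apply (hw u).mpr
    intro i
    have := hP i i.isLt []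
    rwa [List.append_nil] at this
  rw [DFA.mem_accepts, hacc, Set.mem_singleton_iff] at this
  exact hu this

/-- Every non-minimal DFA is S-composite; a minimal DFA is S-prime iff it is
prime; consequently a simple co-safety DFA is S-prime iff it is minimal. -/
theorem stmt17 {α : Type} :
    (∀ (σ : Type) [Fintype σ] (A : DFA α σ), ¬ DFAMinimal A → SComposite A) ∧
    (∀ (σ : Type) [Fintype σ] (A : DFA α σ), DFAMinimal A →
      (¬ SComposite A ↔ ¬ DFAComposite A)) ∧
    (∀ (σ : Type) [Fintype σ] (A : DFA α σ), SimpleCoSafety A →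
      (¬ SComposite A ↔ DFAMinimal A)) := by
  refine ⟨fun σ _ A h => not_minimal_scomposite A h,
    fun σ _ A hmin => not_congr (minimal_scomposite_iff A hmin),
    fun σ _ A hcs => ⟨fun h => ?_, fun hmin => simple_cosafety_minimal_not_scomposite A hcs hmin⟩⟩
  by_contra hnm
  exact h (not_minimal_scomposite A hnm)
end
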